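/- arXiv:1111.2262 — 4 statements merged into one kernel-verified Lean document; each statement's English description precedes it below -/
import Mathlib

section
/- For all positive integers m and N with N ≥ 64 (ln 4)² (m+1)², there exists a real symmetric positive semidefinite N×N matrix K with all diagonal entries equal to 1 such that for every subset S ⊆ {1,…,N} of size at most m, the Nyström approximation error satisfies ‖K − K_b K̂† K_b^⊤‖₂ ≥ N/(4m). -/
/-!
Take `K i j = 1` if `i ≡ j (mod m + 1)` and `0` otherwise: the Gram matrix of the indicator
vectors of the `m + 1` residue classes, hence PSD with unit diagonal. A set `S` of at most `m`
columns misses some class `r`, so the rows of `K_b` indexed by that class vanish and the error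
`K - K_b K̂† K_bᵀ` contains the all-ones block on the class. The norm of an all-ones `c × c`
block is `c`, and every class has at least `⌊N / (m + 1)⌋ ≥ N / (4m)` elements.
-/

open Matrix
open scoped Matrix.Norms.L2Operator

/-- `P` is the Moore–Penrose pseudoinverse of `A`. -/
def IsMoorePenroseInv {n : Type*} [Fintype n] (A P : Matrix n n ℝ) : Prop :=
  A * P * A = A ∧ P * A * P = P ∧ (A * P)ᵀ = A * P ∧ (P * A)ᵀ = P * A

open Finset

namespace Matrix

variable {n κ : Type*}

theorem card_le_l2_opNorm_of_forall_eq_one [Fintype n] [DecidableEq n] (A : Matrix n n ℝ)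
    (T : Finset n) (hA : ∀ i ∈ T, ∀ j ∈ T, A i j = 1) : (#T : ℝ) ≤ ‖A‖ := by
  let u : EuclideanSpace ℝ n := WithLp.toLp 2 fun i => if i ∈ T then 1 else 0
  have hu : ‖u‖ ^ 2 = #T := by
    simp [u, EuclideanSpace.real_norm_sq_eq, apply_ite (· ^ 2)]
  have hAu : inner ℝ u ((EuclideanSpace.equiv n ℝ).symm (A *ᵥ u)) = (#T : ℝ) ^ 2 :=
    calc inner ℝ u ((EuclideanSpace.equiv n ℝ).symm (A *ᵥ u))
        = ∑ i ∈ T, ∑ j ∈ T, A i j := by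
          simp [u, EuclideanSpace.inner_eq_star_dotProduct, dotProduct, mulVec, sum_ite_mem]
      _ = (#T : ℝ) ^ 2 := by simp +contextual [hA, sq]
  rcases (#T).eq_zero_or_pos with hT | hT
  · simp [hT]
  have : (#T : ℝ) ^ 2 ≤ ‖A‖ * #T := calc
    (#T : ℝ) ^ 2 = inner ℝ u ((EuclideanSpace.equiv n ℝ).symm (A *ᵥ u)) := hAu.symm
    _ ≤ ‖u‖ * ‖(EuclideanSpace.equiv n ℝ).symm (A *ᵥ u)‖ := real_inner_le_norm _ _
    _ ≤ ‖u‖ * (‖A‖ * ‖u‖) := by gcongr; exact l2_opNorm_mulVec A u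
    _ = ‖A‖ * #T := by rw [← hu]; ring
  exact le_of_mul_le_mul_right (by rwa [sq] at this) (by exact_mod_cast hT)

section SameFiber

variable [DecidableEq κ]

def sameFiberMatrix (f : n → κ) : Matrix n n ℝ :=
  of fun i j => if f i = f j then 1 else 0

@[simp]
theorem sameFiberMatrix_apply_self (f : n → κ) (i : n) : sameFiberMatrix f i i = 1 := by
  simp [sameFiberMatrix]

theorem sameFiberMatrix_posSemidef [Fintype n] [Fintype κ] (f : n → κ) :
    (sameFiberMatrix f).PosSemidef := by
  let B : Matrix κ n ℝ := of fun k i => if f i = k then 1 else 0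
  have hB : sameFiberMatrix f = Bᴴ * B := by
    ext i j
    simp [sameFiberMatrix, B, mul_apply]
  rw [hB]
  exact posSemidef_conjTranspose_mul_self B

def nystromApprox (K : Matrix n n ℝ) (S : Finset n) (P : Matrix S S ℝ) : Matrix n n ℝ :=
  K.submatrix id (fun i : S => (i : n)) * P * (K.submatrix id (fun i : S => (i : n)))ᵀ

theorem nystromApprox_apply_of_forall_eq_zero {K : Matrix n n ℝ} {S : Finset n}
    (P : Matrix S S ℝ) {i : n} (hi : ∀ s ∈ S, K i s = 0) (j : n) :
    nystromApprox K S P i j = 0 := by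
  simp [nystromApprox, mul_apply, hi]

theorem card_fiber_le_l2_opNorm_sub_nystromApprox [Fintype n] [DecidableEq n]
    (f : n → κ) (S : Finset n) (P : Matrix S S ℝ) {r : κ} (hr : ∀ s ∈ S, f s ≠ r) :
    (#{i | f i = r} : ℝ) ≤ ‖sameFiberMatrix f - nystromApprox (sameFiberMatrix f) S P‖ := by
  refine card_le_l2_opNorm_of_forall_eq_one _ _ fun i hi j hj => ?_
  simp only [mem_filter, mem_univ, true_and] at hi hj
  have hKi : ∀ s ∈ S, sameFiberMatrix f i s = 0 := fun s hs => by
    simp [sameFiberMatrix, hi, (hr s hs).symm]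
  rw [sub_apply, nystromApprox_apply_of_forall_eq_zero P hKi]
  simp [sameFiberMatrix, hi, hj]

end SameFiber

end Matrix

theorem Nat.div_le_card_filter_mod_eq (N : ℕ) {q r : ℕ} (hr : r < q) :
    N / q ≤ #{i : Fin N | (i : ℕ) % q = r} := by
  have hq : 0 < q := by omega
  have hlt (j : Fin (N / q)) : r + j * q < N := calc
    r + j * q < (j + 1) * q := by rw [add_one_mul]; omega
    _ ≤ N := (Nat.le_div_iff_mul_le hq).mp j.isLt
  have := card_le_card_of_injOn (s := univ) (t := {i : Fin N | (i : ℕ) % q = r})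
    (fun j : Fin (N / q) => (⟨r + j * q, hlt j⟩ : Fin N))
    (fun j _ => by simp [Nat.add_mul_mod_self_right, Nat.mod_eq_of_lt hr])
    (fun a _ b _ hab => Fin.ext <| Nat.eq_of_mul_eq_mul_right hq <| by
      simpa using congrArg Fin.val hab)
  simpa using this

theorem div_four_mul_le_div_succ {m N : ℕ} (h : 2 * (m + 1) ≤ N) :
    (N : ℝ) / (4 * m) ≤ (N / (m + 1) : ℕ) := by
  rcases m.eq_zero_or_pos with rfl | hm
  · simp
  have hdiv : (N : ℝ) < (N / (m + 1) : ℕ) * (m + 1) + (m + 1) := by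
    exact_mod_cast Nat.lt_div_mul_add (Nat.succ_pos m)
  have hm' : (1 : ℝ) ≤ m := by exact_mod_cast hm
  have h' : (2 * (m + 1) : ℝ) ≤ N := by exact_mod_cast h
  rw [div_le_iff₀ (by positivity)]
  nlinarith

theorem stmt2_general (m N : ℕ)
    (hNm : (N : ℝ) ≥ 64 * (Real.log 4) ^ 2 * (m + 1) ^ 2) :
    ∃ K : Matrix (Fin N) (Fin N) ℝ, K.PosSemidef ∧ (∀ i, K i i = 1) ∧
      ∀ S : Finset (Fin N), S.card ≤ m →
        ∀ Kdag : Matrix {x // x ∈ S} {x // x ∈ S} ℝ,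
          IsMoorePenroseInv (K.submatrix (fun i : {x // x ∈ S} => (i : Fin N))
              (fun i : {x // x ∈ S} => (i : Fin N))) Kdag →
          ‖K - (K.submatrix id (fun i : {x // x ∈ S} => (i : Fin N)) * Kdag *
              (K.submatrix id (fun i : {x // x ∈ S} => (i : Fin N)))ᵀ)‖
            ≥ (N : ℝ) / (4 * m) := by
  have hN : 2 * (m + 1) ≤ N := by
    have hlog : 1 ≤ Real.log 4 := by
      rw [Real.le_log_iff_exp_le (by norm_num)]
      exact Real.exp_one_lt_d9.le.trans (by norm_num)
    have hm : (1 : ℝ) ≤ m + 1 := by linarith [(m.cast_nonneg : (0 : ℝ) ≤ m)]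
    have : (2 * (m + 1) : ℝ) ≤ N := calc
      (2 * (m + 1) : ℝ) ≤ 64 * 1 ^ 2 * (m + 1) ^ 2 := by nlinarith
      _ ≤ N := hNm.trans' (by gcongr)
    exact_mod_cast this
  let f : Fin N → Fin (m + 1) := fun i => Fin.ofNat (m + 1) i
  refine ⟨sameFiberMatrix f, sameFiberMatrix_posSemidef f, sameFiberMatrix_apply_self f, ?_⟩
  intro S hS P _
  obtain ⟨r, -, hr⟩ : ∃ r ∈ univ, r ∉ S.image f :=
    exists_mem_notMem_of_card_lt_card <| by
      simpa using card_image_le.trans_lt (by omega : #S < m + 1)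
  have hfiber : #{i | f i = r} = #{i : Fin N | (i : ℕ) % (m + 1) = r} := by
    congr; ext i; simp [f, Fin.ext_iff]
  calc (N : ℝ) / (4 * m) ≤ (N / (m + 1) : ℕ) := div_four_mul_le_div_succ hN
    _ ≤ #{i | f i = r} := by exact_mod_cast hfiber ▸ Nat.div_le_card_filter_mod_eq N r.isLt
    _ ≤ _ := card_fiber_le_l2_opNorm_sub_nystromApprox f S P fun s hs h =>
      hr (h ▸ mem_image_of_mem f hs)

/-- for all positive integers `m` and `N` with `N ≥ 64 (ln 4)² (m+1)²`,
there exists a real symmetric PSD `N × N` matrix `K` with unit diagonal such that for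
every subset `S ⊆ {1,…,N}` with `|S| ≤ m`, the Nyström approximation error satisfies
`‖K − K_b K̂† K_bᵀ‖₂ ≥ N / (4 m)`. -/
theorem stmt2 (m N : ℕ) (hm : 0 < m) (hN : 0 < N)
    (hNm : (N : ℝ) ≥ 64 * (Real.log 4) ^ 2 * (m + 1) ^ 2) :
    ∃ K : Matrix (Fin N) (Fin N) ℝ, K.PosSemidef ∧ (∀ i, K i i = 1) ∧
      ∀ S : Finset (Fin N), S.card ≤ m →
        ∀ Kdag : Matrix {x // x ∈ S} {x // x ∈ S} ℝ,
          IsMoorePenroseInv (K.submatrix (fun i : {x // x ∈ S} => (i : Fin N))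
              (fun i : {x // x ∈ S} => (i : Fin N))) Kdag →
          ‖K - (K.submatrix id (fun i : {x // x ∈ S} => (i : Fin N)) * Kdag *
              (K.submatrix id (fun i : {x // x ∈ S} => (i : Fin N)))ᵀ)‖
            ≥ (N : ℝ) / (4 * m) :=
  stmt2_general m N hNm
end

section
/- Let H be a real Hilbert space and v₁, …, v_N ∈ H with ‖v_i‖ ≤ 1 for all i. Let J₁, …, J_m be independent random indices, each uniformly distributed on {1,…,N}. Define the bounded linear operators L_N f = (1/N) Σ_{i=1}^N ⟨v_i, f⟩ v_i and L_m f = (1/m) Σ_{k=1}^m ⟨v_{J_k}, f⟩ v_{J_k} on H. Then for every δ ∈ (0,1), with probability at least 1 − δ, the operator norm satisfies ‖L_N − L_m‖ ≤ 4 ln(2/δ)/√m. -/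
/-!
On the uniform product space `Fin m → Fin N`, put `f J = ‖L_N - L_m J‖`. Replacing one index
`J k` moves `L_m J` by at most `2 / m` in norm, so McDiarmid's inequality bounds the number of
`J` with `f J ≥ 𝔼 f + t` by `N ^ m * exp (-m t² / 16)` (for `t ≤ 4`; the exponential moment
bound only uses `exp y ≤ 1 + y + y²` on `|y| ≤ 1`).

The mean is at most `1 / √m`: in an orthonormal basis of the span of the `v i`, the operator
norm is bounded by the Frobenius norm of the coordinate matrix, and there `L_N - L_m J` is the
deviation of an empirical mean of `m` independent vectors of norm at most `1`, whose second
moment is at most `1 / m`.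

With `t = (4 log (2/δ) - 1) / √m` this gives the failure probability
`exp (-(4 log (2/δ) - 1)² / 16) ≤ δ`, using `log 2 > 1/2`.
-/

open Finset InnerProductSpace Real
open scoped BigOperators RealInnerProductSpace

lemma Fintype.expect_fin_succ_pi {α M : Type*} [Fintype α] [AddCommMonoid M] [Module ℚ≥0 M]
    {m : ℕ} (F : (Fin (m + 1) → α) → M) :
    𝔼 J, F J = 𝔼 t : Fin m → α, 𝔼 a, F (Fin.cons a t) := by
  rw [← Fintype.expect_equiv (Fin.consEquiv fun _ => α) (fun p => F (Fin.cons p.1 p.2)) F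
    fun _ => rfl, ← univ_product_univ, expect_product' (f := fun a t => F (Fin.cons a t)),
    expect_comm]

lemma Real.exp_le_one_add_add_sq {y : ℝ} (hy : |y| ≤ 1) : exp y ≤ 1 + y + y ^ 2 := by
  linarith [(abs_le.1 (Real.abs_exp_sub_one_sub_id_le hy)).2]

lemma abs_sub_expect_le {ι : Type*} [Fintype ι] [Nonempty ι] {x : ℝ} {y : ι → ℝ} {c : ℝ}
    (h : ∀ i, |x - y i| ≤ c) : |x - 𝔼 i, y i| ≤ c := by
  rw [← Fintype.expect_const (ι := ι) x, ← expect_sub_distrib]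
  exact (abs_expect_le _ _).trans (expect_le univ_nonempty fun i _ => h i)

/-- A crude form of Hoeffding's lemma. -/
lemma expect_exp_mul_le {ι : Type*} [Fintype ι] [Nonempty ι] {x : ι → ℝ} {c l : ℝ}
    (hx : 𝔼 i, x i = 0) (hxc : ∀ i, |x i| ≤ c) (hl : 0 ≤ l) (hlc : l * c ≤ 1) :
    𝔼 i, exp (l * x i) ≤ exp (l ^ 2 * c ^ 2) := by
  have hpt : ∀ i, exp (l * x i) ≤ 1 + l * x i + l ^ 2 * c ^ 2 := by
    intro i
    have hlx : |l * x i| ≤ l * c := by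
      rw [abs_mul, abs_of_nonneg hl]; exact mul_le_mul_of_nonneg_left (hxc i) hl
    have hsq : (l * x i) ^ 2 ≤ l ^ 2 * c ^ 2 := by
      rw [← mul_pow, ← sq_abs]; exact pow_le_pow_left₀ (abs_nonneg _) hlx 2
    linarith [Real.exp_le_one_add_add_sq (hlx.trans hlc)]
  calc 𝔼 i, exp (l * x i) ≤ 𝔼 i, (1 + l * x i + l ^ 2 * c ^ 2) :=
        expect_le_expect fun i _ => hpt i
    _ = 1 + l ^ 2 * c ^ 2 := by
        rw [expect_add_distrib, expect_add_distrib, ← mul_expect, hx]; simp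
    _ ≤ exp (l ^ 2 * c ^ 2) := by linarith [Real.add_one_le_exp (l ^ 2 * c ^ 2)]

lemma card_filter_le_le_mul_expect_exp {ι : Type*} [Fintype ι] (g : ι → ℝ) {l : ℝ} (t : ℝ)
    (hl : 0 ≤ l) :
    (#{i | t ≤ g i} : ℝ) ≤ Fintype.card ι * 𝔼 i, exp (l * (g i - t)) := by
  classical
  rw [← nsmul_eq_mul, ← card_univ, card_smul_expect]
  calc (#{i | t ≤ g i} : ℝ) = ∑ i ∈ {i | t ≤ g i}, 1 := by simp
    _ ≤ ∑ i ∈ {i | t ≤ g i}, exp (l * (g i - t)) := by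
        refine sum_le_sum fun i hi => Real.one_le_exp ?_
        exact mul_nonneg hl (sub_nonneg.2 (mem_filter.1 hi).2)
    _ ≤ ∑ i, exp (l * (g i - t)) :=
        sum_le_sum_of_subset_of_nonneg (subset_univ _) fun _ _ _ => (Real.exp_pos _).le

def HasBoundedDifferences {α : Type*} {m : ℕ} (f : (Fin m → α) → ℝ) (c : ℝ) : Prop :=
  ∀ (k : Fin m) (J : Fin m → α) (a : α), |f (Function.update J k a) - f J| ≤ c

section BoundedDifferences

variable {α : Type*} [Fintype α] [Nonempty α]

lemma HasBoundedDifferences.expect_cons {m : ℕ} {f : (Fin (m + 1) → α) → ℝ} {c : ℝ}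
    (hf : HasBoundedDifferences f c) :
    HasBoundedDifferences (fun t : Fin m → α => 𝔼 a, f (Fin.cons a t)) c := by
  intro k t a
  rw [← expect_sub_distrib]
  refine (abs_expect_le _ _).trans (expect_le univ_nonempty fun a' _ => ?_)
  rw [Fin.cons_update]
  exact hf k.succ _ a

lemma HasBoundedDifferences.abs_sub_expect_cons_le {m : ℕ} {f : (Fin (m + 1) → α) → ℝ} {c : ℝ}
    (hf : HasBoundedDifferences f c) (a : α) (t : Fin m → α) :
    |f (Fin.cons a t) - 𝔼 a', f (Fin.cons a' t)| ≤ c :=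
  abs_sub_expect_le fun a' => by
    rw [← Fin.update_cons_zero (α := fun _ => α) a' t a]
    exact hf 0 _ a

/-- McDiarmid's exponential moment bound. -/
theorem HasBoundedDifferences.expect_exp_mul_sub_expect_le {c l : ℝ} (hl : 0 ≤ l)
    (hlc : l * c ≤ 1) {m : ℕ} {f : (Fin m → α) → ℝ} (hf : HasBoundedDifferences f c) :
    𝔼 J, exp (l * (f J - 𝔼 J', f J')) ≤ exp (m * (l ^ 2 * c ^ 2)) := by
  induction m with
  | zero =>
    have hconst : ∀ J, f J = f default := fun J => congrArg f (Subsingleton.elim _ _)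
    simp [hconst]
  | succ m ih =>
    set h : (Fin m → α) → ℝ := fun t => 𝔼 a, f (Fin.cons a t)
    have hmean : 𝔼 J, f J = 𝔼 t, h t := Fintype.expect_fin_succ_pi f
    have hfiber : ∀ t, 𝔼 a, exp (l * (f (Fin.cons a t) - h t)) ≤ exp (l ^ 2 * c ^ 2) :=
      fun t => expect_exp_mul_le (by rw [expect_sub_distrib, Fintype.expect_const, sub_self])
        (fun a => hf.abs_sub_expect_cons_le a t) hl hlc
    calc 𝔼 J, exp (l * (f J - 𝔼 J', f J'))
        = 𝔼 t, exp (l * (h t - 𝔼 t', h t')) *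
            𝔼 a, exp (l * (f (Fin.cons a t) - h t)) := by
          rw [hmean, Fintype.expect_fin_succ_pi]
          refine expect_congr rfl fun t _ => ?_
          rw [mul_expect]
          refine expect_congr rfl fun a _ => ?_
          rw [← Real.exp_add]; ring_nf
      _ ≤ 𝔼 t, exp (l * (h t - 𝔼 t', h t')) * exp (l ^ 2 * c ^ 2) :=
          expect_le_expect fun t _ => mul_le_mul_of_nonneg_left (hfiber t) (Real.exp_pos _).le
      _ ≤ exp (m * (l ^ 2 * c ^ 2)) * exp (l ^ 2 * c ^ 2) := by
          rw [← expect_mul]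
          exact mul_le_mul_of_nonneg_right (ih hf.expect_cons) (Real.exp_pos _).le
      _ = exp ((m + 1 : ℕ) * (l ^ 2 * c ^ 2)) := by
          rw [← Real.exp_add]; push_cast; ring_nf

/-- McDiarmid's inequality, in counting form. -/
theorem HasBoundedDifferences.card_expect_add_le_le {m : ℕ} {f : (Fin m → α) → ℝ} {c t : ℝ}
    (hf : HasBoundedDifferences f c) (hm : 0 < m) (hc : 0 < c) (ht : 0 ≤ t)
    (htc : t ≤ 2 * m * c) :
    (#{J | 𝔼 J', f J' + t ≤ f J} : ℝ) ≤
      Fintype.card α ^ m * exp (-(t ^ 2 / (4 * m * c ^ 2))) := by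
  set l := t / (2 * m * c ^ 2) with hl_def
  have hmc : (0 : ℝ) < 2 * m * c := by positivity
  have hl : 0 ≤ l := by positivity
  have hlc : l * c ≤ 1 := by
    rw [show l * c = t / (2 * m * c) by rw [hl_def]; field_simp, div_le_one hmc]; exact htc
  have hexp : m * (l ^ 2 * c ^ 2) - l * t = -(t ^ 2 / (4 * m * c ^ 2)) := by
    rw [hl_def]; field_simp; ring
  calc (#{J | 𝔼 J', f J' + t ≤ f J} : ℝ)
      = #{J | t ≤ f J - 𝔼 J', f J'} := by simp_rw [le_sub_iff_add_le']
    _ ≤ Fintype.card (Fin m → α) * 𝔼 J, exp (l * ((f J - 𝔼 J', f J') - t)) :=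
        card_filter_le_le_mul_expect_exp _ t hl
    _ = Fintype.card α ^ m * ((𝔼 J, exp (l * (f J - 𝔼 J', f J'))) * exp (-(l * t))) := by
        simp_rw [mul_sub _ _ t, sub_eq_add_neg _ (l * t), Real.exp_add, expect_mul]
        simp
    _ ≤ Fintype.card α ^ m * (exp (m * (l ^ 2 * c ^ 2)) * exp (-(l * t))) := by
        gcongr
        exact hf.expect_exp_mul_sub_expect_le hl hlc
    _ = Fintype.card α ^ m * exp (-(t ^ 2 / (4 * m * c ^ 2))) := by
        rw [← Real.exp_add, ← sub_eq_add_neg, hexp]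

end BoundedDifferences

section Coordinates

variable {H : Type*} [NormedAddCommGroup H] [InnerProductSpace ℝ H] {ι : Type*} [Fintype ι]
  (e : ι → H)

/- `EuclideanSpace ℝ (ι × ι)` stands for the Hilbert–Schmidt operators on `span e`:
`coordOp e` is a contraction into `H →L[ℝ] H` (`norm_coordOp_le`), and `coordVec e u w` are the
coordinates of `rankOne ℝ u w` (`coordOp_coordVec`). -/

noncomputable def coordOp : EuclideanSpace ℝ (ι × ι) →ₗ[ℝ] H →L[ℝ] H :=
  Fintype.linearCombination ℝ (fun p : ι × ι => rankOne ℝ (e p.1) (e p.2)) ∘ₗ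
    (WithLp.linearEquiv 2 ℝ (ι × ι → ℝ)).toLinearMap

noncomputable def coordVec (u w : H) : EuclideanSpace ℝ (ι × ι) :=
  WithLp.toLp 2 fun p => ⟪e p.1, u⟫ * ⟪e p.2, w⟫

lemma coordOp_apply (M : EuclideanSpace ℝ (ι × ι)) :
    coordOp e M = ∑ p, M p • rankOne ℝ (e p.1) (e p.2) := rfl

lemma inner_coordOp_apply (M : EuclideanSpace ℝ (ι × ι)) (u w : H) :
    ⟪u, coordOp e M w⟫ = ⟪M, coordVec e u w⟫ := by
  simp only [coordOp_apply, coordVec, _root_.sum_apply, smul_apply,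
    rankOne_apply, inner_sum, inner_smul_right, PiLp.inner_apply]
  refine sum_congr rfl fun p _ => ?_
  simp only [RCLike.inner_apply, conj_trivial, real_inner_comm u]
  ring

variable {e}

lemma norm_coordVec_le (he : Orthonormal ℝ e) (u w : H) : ‖coordVec e u w‖ ≤ ‖u‖ * ‖w‖ := by
  have bessel : ∀ z : H, ∑ x, ⟪e x, z⟫ ^ 2 ≤ ‖z‖ ^ 2 := fun z => by
    simpa only [Real.norm_eq_abs, sq_abs] using he.sum_inner_products_le z (s := univ)
  rw [EuclideanSpace.norm_eq, ← Real.sqrt_sq (by positivity : 0 ≤ ‖u‖ * ‖w‖)]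
  refine Real.sqrt_le_sqrt ?_
  calc ∑ p : ι × ι, ‖⟪e p.1, u⟫ * ⟪e p.2, w⟫‖ ^ 2
      = (∑ x, ⟪e x, u⟫ ^ 2) * ∑ y, ⟪e y, w⟫ ^ 2 := by
        simp only [Real.norm_eq_abs, sq_abs, mul_pow, Fintype.sum_prod_type, sum_mul_sum]
    _ ≤ ‖u‖ ^ 2 * ‖w‖ ^ 2 :=
        mul_le_mul (bessel u) (bessel w) (sum_nonneg fun _ _ => sq_nonneg _) (sq_nonneg _)
    _ = (‖u‖ * ‖w‖) ^ 2 := by ring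

lemma norm_coordOp_le (he : Orthonormal ℝ e) (M : EuclideanSpace ℝ (ι × ι)) :
    ‖coordOp e M‖ ≤ ‖M‖ := by
  refine ContinuousLinearMap.opNorm_le_bound _ (norm_nonneg _) fun f => ?_
  set g := coordOp e M f
  rcases (norm_nonneg g).eq_or_lt with hg | hg
  · rw [← hg]; positivity
  refine le_of_mul_le_mul_left ?_ hg
  calc ‖g‖ * ‖g‖ = ⟪M, coordVec e g f⟫ := by
        rw [← inner_coordOp_apply, real_inner_self_eq_norm_mul_norm]
    _ ≤ ‖M‖ * (‖g‖ * ‖f‖) := (real_inner_le_norm _ _).trans <|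
        mul_le_mul_of_nonneg_left (norm_coordVec_le he g f) (norm_nonneg _)
    _ = ‖g‖ * (‖M‖ * ‖f‖) := by ring

lemma coordOp_coordVec {u w : H} (hu : ∑ x, ⟪e x, u⟫ • e x = u) (hw : ∑ x, ⟪e x, w⟫ • e x = w) :
    coordOp e (coordVec e u w) = rankOne ℝ u w := by
  conv_rhs => rw [← hu, ← hw]
  simp only [coordOp_apply, coordVec, map_sum, map_smul, _root_.sum_apply,
    smul_apply, Fintype.sum_prod_type, smul_sum, mul_smul]
  rw [sum_comm]
  exact sum_congr rfl fun _ _ => sum_congr rfl fun _ _ => smul_comm _ _ _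

end Coordinates

section SampleMean

variable {α : Type*} [Fintype α] [Nonempty α]
  {E : Type*} [NormedAddCommGroup E] [InnerProductSpace ℝ E]

lemma expect_norm_add_sq {g : α → E} (hg : ∑ a, g a = 0) (s : E) :
    𝔼 a, ‖g a + s‖ ^ 2 = 𝔼 a, ‖g a‖ ^ 2 + ‖s‖ ^ 2 := by
  have hcross : 𝔼 a, 2 * ⟪g a, s⟫ = 0 := by
    rw [← mul_expect, Fintype.expect_eq_sum_div_card, ← sum_inner, hg, inner_zero_left]
    simp
  simp_rw [norm_add_sq_real, expect_add_distrib, hcross, Fintype.expect_const, add_zero]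

lemma expect_norm_sum_comp_sq {g : α → E} (hg : ∑ a, g a = 0) (m : ℕ) :
    𝔼 J : Fin m → α, ‖∑ k, g (J k)‖ ^ 2 = m * 𝔼 a, ‖g a‖ ^ 2 := by
  induction m with
  | zero => simp
  | succ m ih =>
    simp_rw [Fintype.expect_fin_succ_pi, Fin.sum_univ_succ, Fin.cons_zero, Fin.cons_succ,
      expect_norm_add_sq hg, expect_add_distrib, ih, Fintype.expect_const]
    push_cast; ring

lemma expect_le_sqrt_expect_sq {ι : Type*} [Fintype ι] [Nonempty ι] (X : ι → ℝ) :
    𝔼 i, X i ≤ √(𝔼 i, X i ^ 2) := by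
  refine (le_abs_self _).trans (Real.abs_le_sqrt ?_)
  simpa using expect_mul_sq_le_sq_mul_sq univ X 1

theorem expect_norm_inv_smul_sum_sub_le {g : α → E} {B : ℝ} (hg : ∀ a, ‖g a‖ ≤ B) {m : ℕ}
    (hm : 0 < m) :
    𝔼 J : Fin m → α, ‖(Fintype.card α : ℝ)⁻¹ • ∑ a, g a - (m : ℝ)⁻¹ • ∑ k, g (J k)‖ ≤ B / √m := by
  set μ := (Fintype.card α : ℝ)⁻¹ • ∑ a, g a with hμ
  have hm' : (0 : ℝ) < m := Nat.cast_pos.2 hm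
  have hcentered : ∑ a, (g a - μ) = 0 := by
    have : (Fintype.card α : ℝ) ≠ 0 := Nat.cast_ne_zero.2 Fintype.card_ne_zero
    rw [sum_sub_distrib, sum_const, card_univ, hμ, ← Nat.cast_smul_eq_nsmul ℝ, smul_smul,
      mul_inv_cancel₀ this, one_smul, sub_self]
  have hdev : ∀ J : Fin m → α,
      ‖μ - (m : ℝ)⁻¹ • ∑ k, g (J k)‖ = (m : ℝ)⁻¹ * ‖∑ k, (g (J k) - μ)‖ := by
    intro J
    have : μ - (m : ℝ)⁻¹ • ∑ k, g (J k) = -((m : ℝ)⁻¹ • ∑ k, (g (J k) - μ)) := by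
      rw [sum_sub_distrib, sum_const, card_univ, Fintype.card_fin, smul_sub,
        ← Nat.cast_smul_eq_nsmul ℝ, smul_smul, inv_mul_cancel₀ hm'.ne', one_smul]
      abel
    rw [this, norm_neg, norm_smul, Real.norm_of_nonneg (inv_nonneg.2 hm'.le)]
  have hB : 0 ≤ B := (norm_nonneg _).trans (hg (Classical.arbitrary α))
  have hvar : 𝔼 a, ‖g a - μ‖ ^ 2 ≤ B ^ 2 := by
    calc 𝔼 a, ‖g a - μ‖ ^ 2 ≤ 𝔼 a, ‖g a - μ + μ‖ ^ 2 := by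
          rw [expect_norm_add_sq hcentered]; linarith [sq_nonneg ‖μ‖]
      _ ≤ B ^ 2 := expect_le univ_nonempty fun a _ => by
          rw [sub_add_cancel]; exact pow_le_pow_left₀ (norm_nonneg _) (hg a) 2
  calc 𝔼 J : Fin m → α, ‖μ - (m : ℝ)⁻¹ • ∑ k, g (J k)‖
      ≤ √(𝔼 J : Fin m → α, ‖μ - (m : ℝ)⁻¹ • ∑ k, g (J k)‖ ^ 2) := expect_le_sqrt_expect_sq _
    _ = √((m : ℝ)⁻¹ * 𝔼 a, ‖g a - μ‖ ^ 2) := by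
        simp_rw [hdev, mul_pow, ← mul_expect, expect_norm_sum_comp_sq hcentered]
        congr 1; field_simp
    _ ≤ √((m : ℝ)⁻¹ * B ^ 2) := by gcongr
    _ = B / √m := by
        rw [Real.sqrt_mul (inv_nonneg.2 hm'.le), Real.sqrt_sq hB, Real.sqrt_inv, inv_mul_eq_div]

end SampleMean

section Operators

variable {H : Type*} [NormedAddCommGroup H] [InnerProductSpace ℝ H]

lemma exists_orthonormal_sum_inner_smul_eq {s : Set H} (hs : s.Finite) :
    ∃ (d : ℕ) (e : Fin d → H), Orthonormal ℝ e ∧ ∀ u ∈ s, ∑ x, ⟪e x, u⟫ • e x = u := by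
  set K := Submodule.span ℝ s
  have : FiniteDimensional ℝ K := FiniteDimensional.span_of_finite ℝ hs
  let b := stdOrthonormalBasis ℝ K
  refine ⟨_, fun x => b x, b.orthonormal.comp_linearIsometry K.subtypeₗᵢ, fun u hu => ?_⟩
  have hproj : K.starProjection u = u :=
    Submodule.starProjection_eq_self_iff.2 (Submodule.subset_span hu)
  rw [b.starProjection_eq_sum_rankOne] at hproj
  simpa using hproj

variable {α : Type*} [Fintype α] [Nonempty α]

theorem expect_norm_inv_smul_sum_rankOne_sub_le {v : α → H} {B : ℝ} (hv : ∀ a, ‖v a‖ ≤ B)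
    {m : ℕ} (hm : 0 < m) :
    𝔼 J : Fin m → α, ‖(Fintype.card α : ℝ)⁻¹ • ∑ a, rankOne ℝ (v a) (v a) -
      (m : ℝ)⁻¹ • ∑ k, rankOne ℝ (v (J k)) (v (J k))‖ ≤ B ^ 2 / √m := by
  obtain ⟨d, e, he, hspan⟩ := exists_orthonormal_sum_inner_smul_eq (Set.finite_range v)
  set T := fun a => coordVec e (v a) (v a)
  have hT : ∀ a, rankOne ℝ (v a) (v a) = coordOp e (T a) := fun a =>
    (coordOp_coordVec (hspan _ ⟨a, rfl⟩) (hspan _ ⟨a, rfl⟩)).symm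
  have hTB : ∀ a, ‖T a‖ ≤ B ^ 2 := fun a => (norm_coordVec_le he _ _).trans <| by
    rw [sq]; exact mul_le_mul (hv a) (hv a) (norm_nonneg _) ((norm_nonneg _).trans (hv a))
  calc _ ≤ 𝔼 J : Fin m → α,
        ‖(Fintype.card α : ℝ)⁻¹ • ∑ a, T a - (m : ℝ)⁻¹ • ∑ k, T (J k)‖ :=
        expect_le_expect fun J _ => by
          simp_rw [hT, ← map_sum, ← map_smul, ← map_sub]
          exact norm_coordOp_le he _
    _ ≤ B ^ 2 / √m := expect_norm_inv_smul_sum_sub_le hTB hm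

end Operators

section Normed

variable {G : Type*} [SeminormedAddCommGroup G] [NormedSpace ℝ G]

lemma norm_inv_natCast_smul_sum_le {n : ℕ} {F : Fin n → G} {B : ℝ} (hB : 0 ≤ B)
    (hF : ∀ k, ‖F k‖ ≤ B) : ‖(n : ℝ)⁻¹ • ∑ k, F k‖ ≤ B := by
  rcases n.eq_zero_or_pos with rfl | hn
  · simpa using hB
  calc ‖(n : ℝ)⁻¹ • ∑ k, F k‖ ≤ (n : ℝ)⁻¹ * ∑ k, ‖F k‖ := by
        rw [norm_smul, norm_inv, Real.norm_natCast]; gcongr; exact norm_sum_le _ _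
    _ ≤ (n : ℝ)⁻¹ * (n * B) := by
        gcongr; simpa using sum_le_card_nsmul univ (fun k => ‖F k‖) B fun k _ => hF k
    _ = B := by field_simp

lemma hasBoundedDifferences_norm_sub_inv_smul_sum {α : Type*} (A : G) {F : α → G} {B : ℝ}
    (hF : ∀ a, ‖F a‖ ≤ B) (m : ℕ) :
    HasBoundedDifferences (fun J : Fin m → α => ‖A - (m : ℝ)⁻¹ • ∑ k, F (J k)‖) (2 * B / m) := by
  classical
  intro k J a
  have hsum : ∑ k', F (Function.update J k a k') = ∑ k', F (J k') + (F a - F (J k)) := by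
    rw [← Function.comp_def F, Function.comp_update, sum_update_of_mem (mem_univ k),
      sum_eq_add_sum_sdiff_singleton_of_mem (mem_univ k)]
    simp only [Function.comp_apply]; abel
  calc |‖A - (m : ℝ)⁻¹ • ∑ k', F (Function.update J k a k')‖ - ‖A - (m : ℝ)⁻¹ • ∑ k', F (J k')‖|
      ≤ ‖(m : ℝ)⁻¹ • (F (J k) - F a)‖ := by
        refine (abs_norm_sub_norm_le _ _).trans_eq (congrArg _ ?_)
        rw [hsum]; module
    _ ≤ (m : ℝ)⁻¹ * (B + B) := by
        rw [norm_smul, norm_inv, Real.norm_natCast]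
        gcongr; exact (norm_sub_le _ _).trans (add_le_add (hF _) (hF _))
    _ = 2 * B / m := by ring

end Normed

lemma Real.exp_neg_four_log_sub_one_sq_le {δ : ℝ} (hδ : 0 < δ) :
    exp (-((4 * log (2 / δ) - 1) ^ 2 / 16)) ≤ δ := by
  refine (Real.exp_le_exp.2 ?_).trans_eq (Real.exp_log hδ)
  rw [show log δ = log 2 - log (2 / δ) by
    rw [Real.log_div two_ne_zero hδ.ne']; ring]
  nlinarith [sq_nonneg (4 * log (2 / δ) - 3), Real.log_two_gt_d9]

lemma one_sub_mul_card_le_natCard_subtype_le {ι : Type*} [Fintype ι] (g : ι → ℝ) {τ δ : ℝ}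
    (h : (#{i | τ < g i} : ℝ) ≤ δ * Fintype.card ι) :
    (1 - δ) * Fintype.card ι ≤ Nat.card {i // g i ≤ τ} := by
  classical
  have hsplit := card_filter_add_card_filter_not (s := univ) fun i => g i ≤ τ
  simp_rw [not_le, card_univ] at hsplit
  rw [← hsplit] at h
  rw [Nat.card_eq_fintype_card, Fintype.card_subtype, ← hsplit]
  push_cast at h ⊢
  linarith

theorem HasBoundedDifferences.card_lt_four_log_div_sqrt_le {α : Type*} [Fintype α] [Nonempty α]
    {m : ℕ} {f : (Fin m → α) → ℝ} (hf : HasBoundedDifferences f (2 / m)) (hm : 0 < m)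
    (hmean : 𝔼 J, f J ≤ 1 / √m) (hf2 : ∀ J, f J ≤ 2) {δ : ℝ} (hδ : δ ∈ Set.Ioo 0 1) :
    (#{J | 4 * log (2 / δ) / √m < f J} : ℝ) ≤ δ * Fintype.card α ^ m := by
  set L := log (2 / δ)
  by_cases h2 : 2 ≤ 4 * L / √m
  · rw [filter_false_of_mem fun J _ => not_lt.2 ((hf2 J).trans h2)]
    simpa using mul_nonneg hδ.1.le (by positivity)
  have hsqrt : 0 < √(m : ℝ) := Real.sqrt_pos.2 (Nat.cast_pos.2 hm)
  have hL : 1 / 4 ≤ L := by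
    have : log 2 ≤ L :=
      Real.log_le_log two_pos ((le_div_iff₀ hδ.1).2 (by linarith [hδ.2]))
    linarith [Real.log_two_gt_d9]
  set t := (4 * L - 1) / √m
  have hτ : 4 * L / √m = 1 / √m + t := by ring
  calc (#{J | 4 * L / √m < f J} : ℝ) ≤ #{J | 𝔼 J', f J' + t ≤ f J} := by
        gcongr with J
        intro hJ; linarith
    _ ≤ Fintype.card α ^ m * exp (-(t ^ 2 / (4 * m * (2 / m) ^ 2))) := by
        refine hf.card_expect_add_le_le hm (div_pos two_pos (Nat.cast_pos.2 hm))
          (div_nonneg (by linarith) hsqrt.le) ?_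
        rw [show (2 : ℝ) * m * (2 / m) = 4 by field_simp; ring]
        linarith [show 0 < 1 / √(m : ℝ) by positivity]
    _ = Fintype.card α ^ m * exp (-((4 * L - 1) ^ 2 / 16)) := by
        rw [div_pow, Real.sq_sqrt (Nat.cast_nonneg m)]
        field_simp
        norm_num
    _ ≤ δ * Fintype.card α ^ m := by
        rw [mul_comm]
        exact mul_le_mul_of_nonneg_right (Real.exp_neg_four_log_sub_one_sq_le hδ.1) (by positivity)

/-- let `H` be a real Hilbert space and `v₁, …, v_N ∈ H` with `‖v_i‖ ≤ 1`.
Let `J₁, …, J_m` be independent uniform indices in `{1,…,N}` (modelled by the uniform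
distribution on `Fin m → Fin N`, i.e., counting measure normalized by `N^m`).  With
`L_N f = (1/N) Σᵢ ⟨v_i, f⟩ v_i` and `L_m f = (1/m) Σ_k ⟨v_{J_k}, f⟩ v_{J_k}` one has, for
every `δ ∈ (0,1)`, `‖L_N − L_m‖ ≤ 4 ln(2/δ)/√m` with probability at least `1 − δ`. -/
theorem stmt6 {H : Type*} [NormedAddCommGroup H] [InnerProductSpace ℝ H]
    (N m : ℕ) (hN : 0 < N) (hm : 0 < m)
    (v : Fin N → H) (hv : ∀ i, ‖v i‖ ≤ 1)
    (LN : H →L[ℝ] H)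
    (hLN : LN = (N : ℝ)⁻¹ • ∑ i : Fin N, (innerSL ℝ (v i)).smulRight (v i))
    (Lm : (Fin m → Fin N) → (H →L[ℝ] H))
    (hLm : ∀ J, Lm J = (m : ℝ)⁻¹ • ∑ k : Fin m, (innerSL ℝ (v (J k))).smulRight (v (J k)))
    (δ : ℝ) (hδ : δ ∈ Set.Ioo (0 : ℝ) 1) :
    ((Nat.card {J : Fin m → Fin N //
        ‖LN - Lm J‖ ≤ 4 * Real.log (2 / δ) / Real.sqrt m}) : ℝ)
      ≥ (1 - δ) * N ^ m := by
  have : Nonempty (Fin N) := ⟨⟨0, hN⟩⟩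
  have hrankOne : ∀ i, ‖rankOne ℝ (v i) (v i)‖ ≤ 1 := fun i => by
    simpa using mul_le_one₀ (hv i) (norm_nonneg _) (hv i)
  have hLN' : LN = (N : ℝ)⁻¹ • ∑ i, rankOne ℝ (v i) (v i) := hLN
  have hLm' : ∀ J, Lm J = (m : ℝ)⁻¹ • ∑ k, rankOne ℝ (v (J k)) (v (J k)) := hLm
  have hbd : HasBoundedDifferences (fun J => ‖LN - Lm J‖) (2 / m) := by
    simpa only [hLm', mul_one] using hasBoundedDifferences_norm_sub_inv_smul_sum LN hrankOne m
  have hmean : 𝔼 J, ‖LN - Lm J‖ ≤ 1 / √m := by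
    simpa only [hLN', hLm', Fintype.card_fin, one_pow] using
      expect_norm_inv_smul_sum_rankOne_sub_le hv hm
  have hle : ∀ J, ‖LN - Lm J‖ ≤ 2 := fun J => by
    refine (norm_sub_le _ _).trans ?_
    rw [hLN', hLm' J]
    linarith [norm_inv_natCast_smul_sum_le zero_le_one hrankOne,
      norm_inv_natCast_smul_sum_le zero_le_one fun k => hrankOne (J k)]
  have htail := hbd.card_lt_four_log_div_sqrt_le hm hmean hle hδ
  have hcard : (Fintype.card (Fin m → Fin N) : ℝ) = N ^ m := by simp
  rw [Fintype.card_fin, ← hcard] at htail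
  rw [← hcard]
  exact one_sub_mul_card_le_natCard_subtype_le _ htail
end

section
/- Let K be a real symmetric positive semidefinite N×N matrix with all diagonal entries at most 1 and eigenvalues λ₁ ≥ … ≥ λ_N. Let j₁, …, j_m be independent indices, each uniformly distributed on {1,…,N}; set K̂ ∈ ℝ^{m×m} with K̂_{k,l} = K_{j_k, j_l} and K_b ∈ ℝ^{N×m} with (K_b)_{i,k} = K_{i, j_k}. Then for every δ ∈ (0,1) and every r with 1 ≤ r ≤ N−1 and λ_r > 0, with probability at least 1 − δ, ‖K − K_b K̂† K_b^⊤‖₂ ≤ 16 (ln(2/δ))² N² / (m λ_r) + λ_{r+1}. -/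
open Matrix
open scoped Matrix.Norms.L2Operator

/-!
Write `K = Xᵀ X` with `X Xᵀ = diag λ` (take `X = diag (√λ) Vᵀ`) and let `A` be the sampled
columns of `X`. The Nyström residual is `Xᵀ Q X`, where `Q` is the orthogonal projection onto the
complement of the range of `A`; by the C*-identity its norm is `‖Q diag(λ) Q‖`. As `Q` kills
`A Aᵀ`, `diag(λ) Q = E Q` for `E = diag λ - (N/m) A Aᵀ`, and splitting the spectrum at `λ_r`
gives `‖Q diag(λ) Q‖ ≤ ‖E‖² / λ_r + λ_{r+1}`. Finally `m E` is a sum of `m` independent centred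
copies of `diag λ - N xᵢ xᵢᵀ`, whose differences have Frobenius norm at most `√2 N` and whose
second moment is at most `N²`, so McDiarmid's bounded-difference inequality (here a counting
argument over `Fin m → Fin N`) bounds `‖E‖` by `(N √m + 2 N √(m log (2/δ))) / m` outside a set of
proportion `δ / 2`.
-/

open Finset Real Function

section Concentration

variable {α : Type*} [Fintype α]

lemma exp_mul_le_cosh_add_sinh {c d : ℝ} (t : ℝ) (hd : |d| ≤ c) :
    exp (t * d) ≤ cosh (t * c) + d / c * sinh (t * c) := by
  obtain ⟨hdc, hcd⟩ := abs_le.mp hd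
  rcases (abs_nonneg d |>.trans hd).eq_or_lt with rfl | hc
  · simp [show d = 0 by linarith]
  -- `t * d` is a convex combination of `-(t * c)` and `t * c`
  have hcomb := convexOn_exp.2 (Set.mem_univ (-(t * c))) (Set.mem_univ (t * c))
    (div_nonneg (by linarith) (by linarith) : 0 ≤ (c - d) / (2 * c))
    (div_nonneg (by linarith) (by linarith) : 0 ≤ (c + d) / (2 * c)) (by field_simp; ring)
  simp only [smul_eq_mul] at hcomb
  calc exp (t * d) = exp ((c - d) / (2 * c) * -(t * c) + (c + d) / (2 * c) * (t * c)) := by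
        congr 1; field_simp; ring
    _ ≤ _ := hcomb
    _ = cosh (t * c) + d / c * sinh (t * c) := by rw [cosh_eq, sinh_eq]; field_simp; ring

lemma sum_exp_mul_le_of_sum_eq_zero {d : α → ℝ} {c : ℝ} (hsum : ∑ x, d x = 0)
    (hd : ∀ x, |d x| ≤ c) (t : ℝ) :
    ∑ x, exp (t * d x) ≤ Fintype.card α * exp (t ^ 2 * c ^ 2 / 2) :=
  calc ∑ x, exp (t * d x) ≤ ∑ x, (cosh (t * c) + d x / c * sinh (t * c)) :=
        sum_le_sum fun x _ => exp_mul_le_cosh_add_sinh t (hd x)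
    _ = Fintype.card α * cosh (t * c) := by
        rw [sum_add_distrib, ← sum_mul, ← sum_div, hsum]; simp
    _ ≤ Fintype.card α * exp (t ^ 2 * c ^ 2 / 2) := by
        gcongr; simpa [mul_pow] using cosh_le_exp_half_sq (t * c)

lemma abs_sub_mean_le {w : α → ℝ} {c : ℝ} (hw : ∀ a b, w a - w b ≤ c) (x : α) :
    |w x - (∑ y, w y) / Fintype.card α| ≤ c := by
  have hcard : (0 : ℝ) < Fintype.card α := by exact_mod_cast Fintype.card_pos_iff.mpr ⟨x⟩
  have hmean : w x - (∑ y, w y) / Fintype.card α = ∑ y, (w x - w y) / Fintype.card α := by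
    rw [← sum_div, sum_sub_distrib, sum_const, card_univ, nsmul_eq_mul, sub_div,
      mul_div_cancel_left₀ _ hcard.ne']
  rw [hmean]
  calc |∑ y, (w x - w y) / Fintype.card α| ≤ ∑ y, |(w x - w y) / Fintype.card α| :=
        abs_sum_le_sum_abs _ _
    _ ≤ ∑ _y : α, c / Fintype.card α := by
        gcongr with y
        rw [abs_div, abs_of_pos hcard]
        gcongr
        exact abs_le.mpr ⟨by linarith [hw y x], hw x y⟩
    _ = c := by rw [sum_const, card_univ, nsmul_eq_mul, mul_div_cancel₀ _ hcard.ne']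

lemma sum_fin_succ_pi {M : Type*} [AddCommMonoid M] {n : ℕ} (F : (Fin (n + 1) → α) → M) :
    ∑ j, F j = ∑ j' : Fin n → α, ∑ x, F (Fin.cons x j') := by
  rw [← (Fin.consEquiv fun _ => α).sum_comp, Fintype.sum_prod_type, sum_comm]
  rfl

theorem sum_exp_mul_sub_mean_le {n : ℕ} {φ : (Fin n → α) → ℝ} {c : ℝ}
    (hφ : ∀ j k x, φ j - φ (update j k x) ≤ c) (t : ℝ) :
    ∑ j, exp (t * (φ j - (∑ j', φ j') / (Fintype.card α : ℝ) ^ n)) ≤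
      Fintype.card α ^ n * exp (n * (t ^ 2 * c ^ 2 / 2)) := by
  induction n with
  | zero => simp
  | succ n ih =>
    set μ := (∑ j', φ j') / (Fintype.card α : ℝ) ^ (n + 1)
    set ψ : (Fin n → α) → ℝ := fun j' => (∑ x, φ (Fin.cons x j')) / Fintype.card α
    have hψ : ∀ j k x, ψ j - ψ (update j k x) ≤ c := by
      intro j k x
      have : (0 : ℝ) < Fintype.card α := by exact_mod_cast Fintype.card_pos_iff.mpr ⟨x⟩
      rw [← sub_div, ← sum_sub_distrib, div_le_iff₀ this]
      calc ∑ y, (φ (Fin.cons y j) - φ (Fin.cons y (update j k x))) ≤ ∑ _y : α, c := by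
            gcongr with y; rw [Fin.cons_update]; exact hφ _ _ _
        _ = c * Fintype.card α := by simp [mul_comm]
    have hmean : (∑ j', ψ j') / (Fintype.card α : ℝ) ^ n = μ := by
      simp only [ψ, μ, sum_fin_succ_pi φ, ← sum_div, div_div, pow_succ']
    have hfirst : ∀ j', ∑ x, exp (t * (φ (Fin.cons x j') - ψ j')) ≤
        Fintype.card α * exp (t ^ 2 * c ^ 2 / 2) := by
      refine fun j' => sum_exp_mul_le_of_sum_eq_zero ?_ (abs_sub_mean_le fun a b => ?_) t
      · rcases isEmpty_or_nonempty α with hα | hα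
        · simp
        · have : (Fintype.card α : ℝ) ≠ 0 := by positivity
          simp [sum_sub_distrib, mul_div_cancel₀ _ this]
      · simpa [Fin.update_cons_zero] using hφ (Fin.cons a j') 0 b
    calc ∑ j, exp (t * (φ j - μ))
        = ∑ j', (∑ x, exp (t * (φ (Fin.cons x j') - ψ j'))) * exp (t * (ψ j' - μ)) := by
          rw [sum_fin_succ_pi]
          refine sum_congr rfl fun j' _ => ?_
          rw [sum_mul]
          refine sum_congr rfl fun x _ => ?_
          rw [← exp_add]; ring_nf
      _ ≤ ∑ j', Fintype.card α * exp (t ^ 2 * c ^ 2 / 2) * exp (t * (ψ j' - μ)) := by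
          gcongr with j'; exact hfirst j'
      _ ≤ Fintype.card α * exp (t ^ 2 * c ^ 2 / 2) *
            (Fintype.card α ^ n * exp (n * (t ^ 2 * c ^ 2 / 2))) := by
          rw [← mul_sum, ← hmean]; gcongr; exact ih hψ
      _ = Fintype.card α ^ (n + 1) * exp ((n + 1 : ℕ) * (t ^ 2 * c ^ 2 / 2)) := by
          rw [pow_succ, Nat.cast_succ, add_mul, one_mul, exp_add]; ring

theorem card_lt_sub_mean_le {n : ℕ} {φ : (Fin n → α) → ℝ} {c : ℝ}
    (hφ : ∀ j k x, φ j - φ (update j k x) ≤ c) {s : ℝ} (hs : 0 ≤ s) :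
    (#{j | s < φ j - (∑ j', φ j') / (Fintype.card α : ℝ) ^ n} : ℝ) ≤
      Fintype.card α ^ n * exp (-(s ^ 2 / (2 * n * c ^ 2))) := by
  set μ := (∑ j', φ j') / (Fintype.card α : ℝ) ^ n
  set t := s / (n * c ^ 2)
  have ht : 0 ≤ t := by positivity
  have hmarkov : (#{j | s < φ j - μ} : ℝ) * exp (t * s) ≤ ∑ j, exp (t * (φ j - μ)) := by
    rw [← nsmul_eq_mul]
    refine (card_nsmul_le_sum _ _ _ fun j hj => ?_).trans
      (sum_le_sum_of_subset_of_nonneg (subset_univ _) fun _ _ _ => (exp_pos _).le)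
    exact exp_le_exp.mpr (mul_le_mul_of_nonneg_left (mem_filter.mp hj).2.le ht)
  have hexp : n * (t ^ 2 * c ^ 2 / 2) + -(t * s) = -(s ^ 2 / (2 * n * c ^ 2)) := by
    rcases eq_or_ne ((n : ℝ) * c ^ 2) 0 with h | h
    · have h' : 2 * (n : ℝ) * c ^ 2 = 0 := by rw [mul_assoc, h, mul_zero]
      simp [t, h, h']
    · simp only [t]; field_simp; ring
  calc (#{j | s < φ j - μ} : ℝ)
      = #{j | s < φ j - μ} * exp (t * s) * exp (-(t * s)) := by
        rw [mul_assoc, ← exp_add, add_neg_cancel, exp_zero, mul_one]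
    _ ≤ Fintype.card α ^ n * exp (n * (t ^ 2 * c ^ 2 / 2)) * exp (-(t * s)) :=
        mul_le_mul_of_nonneg_right (hmarkov.trans (sum_exp_mul_sub_mean_le hφ t)) (exp_pos _).le
    _ = Fintype.card α ^ n * exp (-(s ^ 2 / (2 * n * c ^ 2))) := by
        rw [mul_assoc, ← exp_add, hexp]

variable {H : Type*} [NormedAddCommGroup H] [InnerProductSpace ℝ H]

theorem sum_norm_sum_sq_mul_card {g : α → H} (hg : ∑ i, g i = 0) (n : ℕ) :
    (∑ j : Fin n → α, ‖∑ k, g (j k)‖ ^ 2) * Fintype.card α =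
      n * Fintype.card α ^ n * ∑ i, ‖g i‖ ^ 2 := by
  induction n with
  | zero => simp
  | succ n ih =>
    -- the cross terms vanish because `g` has mean zero
    have hfirst : ∀ j' : Fin n → α, ∑ x, ‖g x + ∑ k, g (j' k)‖ ^ 2 =
        ∑ x, ‖g x‖ ^ 2 + Fintype.card α * ‖∑ k, g (j' k)‖ ^ 2 := by
      intro j'
      simp only [norm_add_sq_real, sum_add_distrib, ← mul_sum, ← sum_inner, hg, inner_zero_left,
        mul_zero, add_zero, sum_const, card_univ, nsmul_eq_mul]
    rw [sum_fin_succ_pi]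
    simp only [Fin.sum_univ_succ, Fin.cons_zero, Fin.cons_succ, hfirst, sum_add_distrib,
      sum_const, card_univ, Fintype.card_pi, Fintype.card_fin, prod_const, nsmul_eq_mul,
      ← mul_sum]
    push_cast
    linear_combination (Fintype.card α : ℝ) * ih

theorem card_lt_norm_sum_le [Nonempty α] {g : α → H} (hg : ∑ i, g i = 0) {c v : ℝ}
    (hc : ∀ a b, ‖g a - g b‖ ≤ c) (hv : ∑ i, ‖g i‖ ^ 2 ≤ Fintype.card α * v) (m : ℕ)
    {s : ℝ} (hs : 0 ≤ s) :
    (#{j : Fin m → α | √(m * v) + s < ‖∑ k, g (j k)‖} : ℝ) ≤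
      Fintype.card α ^ m * exp (-(s ^ 2 / (2 * m * c ^ 2))) := by
  set φ : (Fin m → α) → ℝ := fun j => ‖∑ k, g (j k)‖
  have hφ : ∀ j k x, φ j - φ (update j k x) ≤ c := by
    intro j k x
    have hsum : ∑ l, g (j l) - ∑ l, g (update j k x l) = g (j k) - g x := by
      rw [← comp_def g (update j k x), comp_update, sum_update_of_mem (mem_univ k),
        sum_eq_add_sum_sdiff_singleton_of_mem (mem_univ k)]
      simp only [Function.comp_apply]
      abel
    calc φ j - φ (update j k x) ≤ ‖∑ l, g (j l) - ∑ l, g (update j k x l)‖ :=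
          norm_sub_norm_le _ _
      _ ≤ c := hsum ▸ hc _ _
  have hcard : (0 : ℝ) < Fintype.card α := by exact_mod_cast Fintype.card_pos
  have hmean : (∑ j, φ j) / Fintype.card α ^ m ≤ √(m * v) := by
    have hsq : ∑ j, φ j ^ 2 ≤ m * Fintype.card α ^ m * v := by
      refine le_of_mul_le_mul_right ?_ hcard
      rw [sum_norm_sum_sq_mul_card hg m]
      calc (m : ℝ) * Fintype.card α ^ m * ∑ i, ‖g i‖ ^ 2
          ≤ m * Fintype.card α ^ m * (Fintype.card α * v) := by gcongr
        _ = m * Fintype.card α ^ m * v * Fintype.card α := by ring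
    have hcs : (∑ j, φ j) ^ 2 ≤ Fintype.card α ^ m * ∑ j, φ j ^ 2 := by
      simpa using sq_sum_le_card_mul_sum_sq (s := univ) (f := φ)
    refine (le_abs_self _).trans (abs_le_sqrt ?_)
    rw [div_pow, div_le_iff₀ (by positivity)]
    calc (∑ j, φ j) ^ 2 ≤ Fintype.card α ^ m * (m * Fintype.card α ^ m * v) := by
          refine hcs.trans ?_; gcongr
      _ = m * v * ((Fintype.card α : ℝ) ^ m) ^ 2 := by ring
  refine le_trans ?_ (card_lt_sub_mean_le hφ hs)
  exact_mod_cast card_le_card fun j hj => by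
    simp only [mem_filter, mem_univ, true_and] at hj ⊢
    push_cast
    linarith

end Concentration

section Frobenius

variable {n : Type*} [Fintype n]

theorem l2_opNorm_le_norm_vec [DecidableEq n] {m : Type*} [Fintype m] (M : Matrix m n ℝ) :
    ‖M‖ ≤ ‖WithLp.toLp 2 M.vec‖ := by
  rw [l2_opNorm_def]
  refine ContinuousLinearMap.opNorm_le_bound _ (norm_nonneg _) fun x => ?_
  rw [← sq_le_sq₀ (norm_nonneg _) (by positivity), mul_pow, EuclideanSpace.real_norm_sq_eq,
    EuclideanSpace.real_norm_sq_eq, EuclideanSpace.real_norm_sq_eq, Fintype.sum_prod_type,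
    sum_comm, sum_mul]
  refine sum_le_sum fun a _ => ?_
  simpa [toLpLin_apply, mulVec, dotProduct, vec] using
    sum_mul_sq_le_sq_mul_sq univ (M a) x.ofLp

theorem inner_vec_vecMulVec (u v : n → ℝ) :
    inner ℝ (WithLp.toLp 2 (vecMulVec u u).vec) (WithLp.toLp 2 (vecMulVec v v).vec) =
      (u ⬝ᵥ v) ^ 2 := by
  simp only [EuclideanSpace.inner_toLp_toLp, star_trivial, dotProduct, vec, vecMulVec_apply,
    Fintype.sum_prod_type, sq, sum_mul_sum]
  exact sum_congr rfl fun _ _ => sum_congr rfl fun _ _ => by ring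

theorem norm_vec_vecMulVec (u : n → ℝ) : ‖WithLp.toLp 2 (vecMulVec u u).vec‖ = u ⬝ᵥ u := by
  rw [norm_eq_sqrt_real_inner, inner_vec_vecMulVec,
    sqrt_sq (by simpa using dotProduct_self_star_nonneg u)]

theorem norm_vec_vecMulVec_sub_le {u v : n → ℝ} (hu : u ⬝ᵥ u ≤ 1) (hv : v ⬝ᵥ v ≤ 1) :
    ‖WithLp.toLp 2 (vecMulVec u u).vec - WithLp.toLp 2 (vecMulVec v v).vec‖ ≤ √2 := by
  have hu0 : 0 ≤ u ⬝ᵥ u := by simpa using dotProduct_self_star_nonneg u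
  have hv0 : 0 ≤ v ⬝ᵥ v := by simpa using dotProduct_self_star_nonneg v
  refine le_sqrt_of_sq_le ?_
  rw [norm_sub_sq_real, norm_vec_vecMulVec, norm_vec_vecMulVec, inner_vec_vecMulVec]
  nlinarith [sq_nonneg (u ⬝ᵥ v)]

end Frobenius

theorem mul_transpose_eq_sum_vecMulVec {n α : Type*} [Fintype α] (X : Matrix n α ℝ) :
    X * Xᵀ = ∑ i, vecMulVec (fun a => X a i) (fun a => X a i) := by
  ext a b
  simp [mul_apply, vecMulVec_apply, Matrix.sum_apply]

theorem sum_norm_sum_sub_card_smul_sq_le {α H : Type*} [Fintype α] [NormedAddCommGroup H]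
    [InnerProductSpace ℝ H] (y : α → H) :
    ∑ i, ‖∑ i', y i' - (Fintype.card α : ℝ) • y i‖ ^ 2 ≤
      (Fintype.card α : ℝ) ^ 2 * ∑ i, ‖y i‖ ^ 2 := by
  simp only [norm_sub_sq_real, norm_smul, inner_smul_right, sum_add_distrib, sum_sub_distrib,
    ← inner_sum, ← mul_sum, sum_const, card_univ, nsmul_eq_mul, real_inner_self_eq_norm_sq,
    mul_pow, Real.norm_natCast]
  nlinarith [sq_nonneg ‖∑ i, y i‖, (Nat.cast_nonneg (Fintype.card α) : (0 : ℝ) ≤ _)]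

theorem card_lt_norm_vec_gram_sub_le {n α : Type*} [Fintype n] [Fintype α] [Nonempty α]
    (X : Matrix n α ℝ) (hX : ∀ i, (Xᵀ * X) i i ≤ 1) (m : ℕ) {s : ℝ} (hs : 0 ≤ s) :
    (#{j : Fin m → α | Fintype.card α * √m + s < ‖WithLp.toLp 2 ((m : ℝ) • (X * Xᵀ) -
        (Fintype.card α : ℝ) • (X.submatrix id j * (X.submatrix id j)ᵀ)).vec‖} : ℝ) ≤
      Fintype.card α ^ m * exp (-(s ^ 2 / (4 * m * Fintype.card α ^ 2))) := by
  set N : ℝ := (Fintype.card α : ℝ)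
  set y : α → EuclideanSpace ℝ (n × n) :=
    fun i => WithLp.toLp 2 (vecMulVec (fun a => X a i) (fun a => X a i)).vec
  set g : α → EuclideanSpace ℝ (n × n) := fun i => ∑ i', y i' - N • y i
  have hcol : ∀ i, (fun a => X a i) ⬝ᵥ (fun a => X a i) ≤ 1 := by
    simpa [mul_apply, dotProduct] using hX
  have hsample : ∀ j : Fin m → α, ∑ k, g (j k) =
      WithLp.toLp 2 ((m : ℝ) • (X * Xᵀ) - N • (X.submatrix id j * (X.submatrix id j)ᵀ)).vec := by
    intro j
    simp only [g, y, mul_transpose_eq_sum_vecMulVec, sum_sub_distrib, sum_const, card_univ,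
      Fintype.card_fin, vec_sub, vec_smul, vec_sum, WithLp.toLp_sub, WithLp.toLp_smul,
      WithLp.toLp_sum, ← smul_sum, submatrix_apply, id, Nat.cast_smul_eq_nsmul]
  have hg : ∑ i, g i = 0 := by simp [g, sum_sub_distrib, ← smul_sum, N, Nat.cast_smul_eq_nsmul]
  have hc : ∀ a b, ‖g a - g b‖ ≤ N * √2 := by
    intro a b
    have : g a - g b = N • (y b - y a) := by simp only [g, smul_sub]; abel
    rw [this, norm_smul, Real.norm_natCast]
    gcongr
    exact norm_vec_vecMulVec_sub_le (hcol b) (hcol a)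
  have hv : ∑ i, ‖g i‖ ^ 2 ≤ N * N ^ 2 := by
    refine (sum_norm_sum_sub_card_smul_sq_le y).trans ?_
    calc N ^ 2 * ∑ i, ‖y i‖ ^ 2 ≤ N ^ 2 * ∑ _i : α, 1 := by
          gcongr with i
          exact pow_le_one₀ (norm_nonneg _) ((norm_vec_vecMulVec _).trans_le (hcol i))
      _ = N * N ^ 2 := by rw [sum_const, card_univ, nsmul_eq_mul, mul_one, mul_comm]
  have htail := card_lt_norm_sum_le hg hc hv m hs
  simp only [hsample] at htail
  convert htail using 5
  · rw [sqrt_mul (Nat.cast_nonneg m), sqrt_sq (Nat.cast_nonneg _), mul_comm]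
  · rw [mul_pow, sq_sqrt zero_le_two]; ring

namespace IsMoorePenroseInv

variable {n : Type*} [Fintype n] {A P Q : Matrix n n ℝ}

theorem unique (hP : IsMoorePenroseInv A P) (hQ : IsMoorePenroseInv A Q) : P = Q := by
  obtain ⟨hP1, hP2, hP3, hP4⟩ := hP
  obtain ⟨hQ1, hQ2, hQ3, hQ4⟩ := hQ
  have hP' : P = P * A * Q :=
    calc P = P * (A * P)ᵀ := by rw [hP3, ← Matrix.mul_assoc, hP2]
      _ = P * (A * Q * (A * P))ᵀ := by
        rw [show A * Q * (A * P) = A * Q * A * P by simp only [Matrix.mul_assoc], hQ1]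
      _ = P * A * P * A * Q := by rw [transpose_mul, hQ3, hP3]; simp only [Matrix.mul_assoc]
      _ = P * A * Q := by rw [hP2]
  have hQ' : Q = P * A * Q :=
    calc Q = (Q * A)ᵀ * Q := by rw [hQ4, hQ2]
      _ = (Q * A * (P * A))ᵀ * Q := by
        rw [show Q * A * (P * A) = Q * (A * P * A) by simp only [Matrix.mul_assoc], hP1]
      _ = P * A * (Q * A * Q) := by rw [transpose_mul, hP4, hQ4]; simp only [Matrix.mul_assoc]
      _ = P * A * Q := by rw [hQ2]
  rw [hP', ← hQ']

theorem transpose (hP : IsMoorePenroseInv A P) : IsMoorePenroseInv Aᵀ Pᵀ := by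
  obtain ⟨h1, h2, h3, h4⟩ := hP
  refine ⟨?_, ?_, ?_, ?_⟩
  · rw [← transpose_mul, ← transpose_mul, ← Matrix.mul_assoc, h1]
  · rw [← transpose_mul, ← transpose_mul, ← Matrix.mul_assoc, h2]
  · rw [← transpose_mul, transpose_transpose, h4]
  · rw [← transpose_mul, transpose_transpose, h3]

theorem transpose_eq_self (hA : Aᵀ = A) (hP : IsMoorePenroseInv A P) : Pᵀ = P :=
  (hA ▸ hP.transpose).unique hP

end IsMoorePenroseInv

section Projection

variable {m n : Type*} [Fintype m] [Fintype n] {A : Matrix m n ℝ} {P : Matrix n n ℝ}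

theorem IsMoorePenroseInv.mul_mul_transpose_mul_self (hP : IsMoorePenroseInv (Aᵀ * A) P) :
    A * P * Aᵀ * A = A := by
  have hPt : Pᵀ = P := hP.transpose_eq_self (by rw [transpose_mul, transpose_transpose])
  have h1 : Aᵀ * (A * (P * (Aᵀ * A))) = Aᵀ * A := by simpa only [Matrix.mul_assoc] using hP.1
  set M := A * P * Aᵀ * A - A
  suffices Mᴴ * M = 0 from sub_eq_zero.mp (conjTranspose_mul_self_eq_zero.mp this)
  simp only [M, conjTranspose_eq_transpose_of_trivial, transpose_sub, transpose_mul,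
    transpose_transpose, hPt, Matrix.sub_mul, Matrix.mul_sub, Matrix.mul_assoc, h1]
  abel

theorem IsMoorePenroseInv.isStarProjection (hP : IsMoorePenroseInv (Aᵀ * A) P) :
    IsStarProjection (A * P * Aᵀ) where
  isIdempotentElem := by
    rw [IsIdempotentElem, ← Matrix.mul_assoc _ (A * P), ← Matrix.mul_assoc _ A,
      hP.mul_mul_transpose_mul_self]
  isSelfAdjoint := by
    rw [IsSelfAdjoint, star_eq_conjTranspose, conjTranspose_eq_transpose_of_trivial,
      transpose_mul, transpose_mul, transpose_transpose,
      hP.transpose_eq_self (by rw [transpose_mul, transpose_transpose]), Matrix.mul_assoc]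

end Projection

theorem IsStarProjection.norm_star_mul_mul_self {R : Type*} [NonUnitalNormedRing R] [StarRing R]
    [CStarRing R] {q : R} (hq : IsStarProjection q) (x : R) :
    ‖star x * q * x‖ = ‖q * (x * star x) * q‖ := by
  have h1 : star x * q * x = star (q * x) * (q * x) := by
    rw [star_mul, hq.isSelfAdjoint.star_eq, ← mul_assoc, mul_assoc (star x) q q,
      hq.isIdempotentElem.eq]
  have h2 : q * (x * star x) * q = q * x * star (q * x) := by
    rw [star_mul, hq.isSelfAdjoint.star_eq, mul_assoc, mul_assoc, mul_assoc]
  rw [h1, h2, CStarRing.norm_star_mul_self, CStarRing.norm_self_mul_star]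

theorem norm_mul_diagonal_mul_le {n : Type*} [Fintype n] [DecidableEq n] {Q E : Matrix n n ℝ}
    (hQ : IsStarProjection Q) {lam : n → ℝ} (hlam : 0 ≤ lam) {p q : n} (hp : 0 < lam p)
    (hsplit : ∀ a, lam p ≤ lam a ∨ lam a ≤ lam q) (hE : diagonal lam * Q = E * Q) :
    ‖Q * diagonal lam * Q‖ ≤ ‖E‖ ^ 2 / lam p + lam q := by
  -- `diagonal lam = star B * B + R` with `B = D * diagonal lam` carrying the eigenvalues
  -- `≥ lam p`; on the range of `Q` the matrix `B` agrees with `D * E`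
  set D : Matrix n n ℝ := diagonal fun a => if lam p ≤ lam a then (√(lam a))⁻¹ else 0
  set R : Matrix n n ℝ := diagonal fun a => if lam p ≤ lam a then 0 else lam a
  have hdecomp : diagonal lam = star (D * diagonal lam) * (D * diagonal lam) + R := by
    simp only [D, R, star_eq_conjTranspose, diagonal_conjTranspose,
      diagonal_mul_diagonal, diagonal_add, star_trivial]
    congr 1; funext a
    split_ifs with h
    · have : 0 < lam a := hp.trans_le h
      field_simp
      rw [sq_sqrt this.le]; ring
    · simp
  have hB : D * E * Q = D * diagonal lam * Q := by rw [Matrix.mul_assoc, ← hE, Matrix.mul_assoc]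
  have hD : ‖D‖ ^ 2 ≤ (lam p)⁻¹ := by
    have hsq : 0 < √(lam p) := sqrt_pos.mpr hp
    have : ‖D‖ ≤ (√(lam p))⁻¹ := by
      rw [l2_opNorm_diagonal, pi_norm_le_iff_of_nonneg (by positivity)]
      intro a
      split_ifs with h
      · rw [norm_inv, norm_of_nonneg (sqrt_nonneg _)]
        exact inv_anti₀ hsq (sqrt_le_sqrt h)
      · simp
    calc ‖D‖ ^ 2 ≤ ((√(lam p))⁻¹) ^ 2 := by gcongr
      _ = (lam p)⁻¹ := by rw [inv_pow, sq_sqrt hp.le]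
  have hR : ‖R‖ ≤ lam q := by
    rw [l2_opNorm_diagonal, pi_norm_le_iff_of_nonneg (hlam q)]
    intro a
    split_ifs with h
    · simpa using hlam q
    · rw [norm_of_nonneg (hlam a)]; exact (hsplit a).resolve_left h
  have hQ1 : ‖Q‖ ≤ 1 := hQ.norm_le
  calc ‖Q * diagonal lam * Q‖ = ‖star (D * E * Q) * (D * E * Q) + Q * R * Q‖ := by
        rw [hB, star_mul, hQ.isSelfAdjoint.star_eq]
        nth_rw 1 [hdecomp]
        simp only [Matrix.mul_add, Matrix.add_mul, Matrix.mul_assoc]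
    _ ≤ ‖D * E * Q‖ ^ 2 + ‖Q * R * Q‖ := by
        rw [sq, ← CStarRing.norm_star_mul_self]; exact norm_add_le _ _
    _ ≤ (‖D‖ * ‖E‖) ^ 2 + ‖R‖ := by
        gcongr
        · calc ‖D * E * Q‖ ≤ ‖D‖ * ‖E‖ * ‖Q‖ := norm_mul₃_le
            _ ≤ ‖D‖ * ‖E‖ * 1 := by gcongr
            _ = ‖D‖ * ‖E‖ := mul_one _
        · calc ‖Q * R * Q‖ ≤ ‖Q‖ * ‖R‖ * ‖Q‖ := norm_mul₃_le
            _ ≤ 1 * ‖R‖ * 1 := by gcongr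
            _ = ‖R‖ := by ring
    _ ≤ ‖E‖ ^ 2 / lam p + lam q := by
        rw [mul_pow, div_eq_inv_mul]
        gcongr

section Nystrom

variable {n ι : Type*} [Fintype n] [DecidableEq n] [Fintype ι]

theorem nystrom_residual_eq (X : Matrix n n ℝ) (j : ι → n) (P : Matrix ι ι ℝ) :
    Xᵀ * X - (Xᵀ * X).submatrix id j * P * ((Xᵀ * X).submatrix id j)ᵀ =
      Xᵀ * (1 - X.submatrix id j * P * (X.submatrix id j)ᵀ) * X := by
  have : (Xᵀ * X).submatrix id j = Xᵀ * X.submatrix id j := by ext; simp [mul_apply]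
  rw [this, transpose_mul, transpose_transpose, Matrix.mul_sub, Matrix.sub_mul, Matrix.mul_one]
  simp only [Matrix.mul_assoc]

theorem norm_nystrom_residual_le (X : Matrix n n ℝ) {lam : n → ℝ} (hX : X * Xᵀ = diagonal lam)
    (hlam : 0 ≤ lam) {p q : n} (hp : 0 < lam p) (hsplit : ∀ a, lam p ≤ lam a ∨ lam a ≤ lam q)
    (j : ι → n) {P : Matrix ι ι ℝ} (hP : IsMoorePenroseInv ((Xᵀ * X).submatrix j j) P) (t : ℝ) :
    ‖Xᵀ * X - (Xᵀ * X).submatrix id j * P * ((Xᵀ * X).submatrix id j)ᵀ‖ ≤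
      ‖diagonal lam - t • (X.submatrix id j * (X.submatrix id j)ᵀ)‖ ^ 2 / lam p + lam q := by
  set A := X.submatrix id j
  have hG : (Xᵀ * X).submatrix j j = Aᵀ * A := by ext; simp [A, mul_apply]
  rw [hG] at hP
  set Q := 1 - A * P * Aᵀ
  have hQ : IsStarProjection Q := hP.isStarProjection.one_sub
  have hQt : Qᵀ = Q := by
    simpa [star_eq_conjTranspose, conjTranspose_eq_transpose_of_trivial] using
      hQ.isSelfAdjoint.star_eq
  have hAQ : Aᵀ * Q = 0 := by
    have hQA : Q * A = 0 := by
      rw [Matrix.sub_mul, Matrix.one_mul, hP.mul_mul_transpose_mul_self, sub_self]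
    simpa [transpose_mul, hQt] using congrArg transpose hQA
  have hnorm := hQ.norm_star_mul_mul_self X
  simp only [star_eq_conjTranspose, conjTranspose_eq_transpose_of_trivial] at hnorm
  rw [nystrom_residual_eq, hnorm, hX]
  refine norm_mul_diagonal_mul_le hQ hlam hp hsplit ?_
  rw [Matrix.sub_mul, Matrix.smul_mul, Matrix.mul_assoc, hAQ, Matrix.mul_zero, smul_zero,
    sub_zero]

end Nystrom

theorem Matrix.PosSemidef.nonneg_of_eq_mul_diagonal_mul_transpose {n : Type*} [Fintype n]
    [DecidableEq n] {K V : Matrix n n ℝ} {lam : n → ℝ} (hK : K.PosSemidef) (hV : Vᵀ * V = 1)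
    (hdecomp : K = V * diagonal lam * Vᵀ) : 0 ≤ lam := by
  have h : Vᵀ * K * V = diagonal lam := by
    rw [hdecomp]
    simp only [← Matrix.mul_assoc, hV, Matrix.one_mul]
    rw [Matrix.mul_assoc, hV, Matrix.mul_one]
  have := hK.conjTranspose_mul_mul_same V
  rw [conjTranspose_eq_transpose_of_trivial, h, posSemidef_diagonal_iff] at this
  exact this

theorem exists_gram_factor {n : Type*} [Fintype n] [DecidableEq n] {K V : Matrix n n ℝ}
    {lam : n → ℝ} (hlam : 0 ≤ lam) (hV : Vᵀ * V = 1) (hdecomp : K = V * diagonal lam * Vᵀ) :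
    ∃ X : Matrix n n ℝ, Xᵀ * X = K ∧ X * Xᵀ = diagonal lam := by
  have hsq : diagonal (fun a => √(lam a)) * diagonal (fun a => √(lam a)) = diagonal lam := by
    rw [diagonal_mul_diagonal]
    exact congrArg diagonal (funext fun a => mul_self_sqrt (hlam a))
  refine ⟨diagonal (fun a => √(lam a)) * Vᵀ, ?_, ?_⟩
  · rw [transpose_mul, transpose_transpose, diagonal_transpose, hdecomp, ← hsq]
    simp only [Matrix.mul_assoc]
  · rw [transpose_mul, transpose_transpose, diagonal_transpose, Matrix.mul_assoc,
      ← Matrix.mul_assoc Vᵀ, hV, Matrix.one_mul, hsq]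

theorem one_sub_mul_card_le_nat_card {β : Type*} [Fintype β] {p bad : β → Prop}
    [DecidablePred bad] (hp : ∀ x, ¬ bad x → p x) {ε : ℝ}
    (hbad : (#{x | bad x} : ℝ) ≤ ε * Fintype.card β) :
    (1 - ε) * Fintype.card β ≤ Nat.card {x // p x} := by
  classical
  have hgood : #{x | ¬ bad x} ≤ Nat.card {x // p x} := by
    rw [Nat.card_eq_fintype_card, Fintype.card_subtype]
    exact card_le_card fun x hx => by
      simp only [mem_filter, mem_univ, true_and] at hx ⊢
      exact hp x hx
  have hsplit := card_filter_add_card_filter_not (s := univ) (p := bad)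
  rw [card_univ] at hsplit
  have : (#{x | bad x} : ℝ) + #{x | ¬ bad x} = Fintype.card β := by exact_mod_cast hsplit
  have : (#{x | ¬ bad x} : ℝ) ≤ Nat.card {x // p x} := by exact_mod_cast hgood
  linarith

theorem sq_le_of_mul_le_add_two_mul_sqrt {N m L e : ℝ} (hN : 0 ≤ N) (hm : 0 < m)
    (hL : log 2 ≤ L) (he : 0 ≤ e) (hle : m * e ≤ N * √m + 2 * N * √(L * m)) :
    e ^ 2 ≤ 16 * L ^ 2 * N ^ 2 / m := by
  have hL0 : 0 < L := lt_of_lt_of_le (log_pos one_lt_two) hL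
  set u := √L
  have hu : u ^ 2 = L := sq_sqrt hL0.le
  have hu0 : 0 ≤ u := sqrt_nonneg L
  -- `1 + 2 u ≤ 4 u ^ 2` as soon as `u ≥ 0.81`, and here `u ^ 2 ≥ log 2 > 0.69`
  have hkey : 1 + 2 * u ≤ 4 * u ^ 2 := by
    nlinarith [log_two_gt_d9, sq_nonneg (u - 0.8325)]
  have hsm : 0 < √m := sqrt_pos.mpr hm
  have hsm2 : √m ^ 2 = m := sq_sqrt hm.le
  have hle' : √m * e ≤ N * (1 + 2 * u) := by
    rw [sqrt_mul hL0.le] at hle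
    nlinarith
  rw [le_div_iff₀ hm, ← hsm2, ← hu]
  have : (√m * e) ^ 2 ≤ (N * (4 * u ^ 2)) ^ 2 :=
    pow_le_pow_left₀ (by positivity) (hle'.trans (by gcongr)) 2
  nlinarith

theorem norm_nystrom_residual_le_of_norm_vec_le {n ι : Type*} [Fintype n] [DecidableEq n]
    [Fintype ι] (X : Matrix n n ℝ) {lam : n → ℝ} (hX : X * Xᵀ = diagonal lam) (hlam : 0 ≤ lam)
    {p q : n} (hp : 0 < lam p) (hsplit : ∀ a, lam p ≤ lam a ∨ lam a ≤ lam q) (j : ι → n)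
    {P : Matrix ι ι ℝ} (hP : IsMoorePenroseInv ((Xᵀ * X).submatrix j j) P) {c m L : ℝ}
    (hc : 0 ≤ c) (hm : 0 < m) (hL : log 2 ≤ L)
    (hj : ‖WithLp.toLp 2 (m • diagonal lam - c • (X.submatrix id j * (X.submatrix id j)ᵀ)).vec‖ ≤
      c * √m + 2 * c * √(L * m)) :
    ‖Xᵀ * X - (Xᵀ * X).submatrix id j * P * ((Xᵀ * X).submatrix id j)ᵀ‖ ≤
      16 * L ^ 2 * c ^ 2 / (m * lam p) + lam q := by
  set A := X.submatrix id j
  refine (norm_nystrom_residual_le X hX hlam hp hsplit j hP (c / m)).trans ?_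
  rw [← div_div]
  gcongr
  refine sq_le_of_mul_le_add_two_mul_sqrt hc hm hL (norm_nonneg _) ?_
  have hE : m • (diagonal lam - (c / m) • (A * Aᵀ)) = m • diagonal lam - c • (A * Aᵀ) := by
    rw [smul_sub, smul_smul, mul_div_cancel₀ _ hm.ne']
  calc m * ‖diagonal lam - (c / m) • (A * Aᵀ)‖
      ≤ m * ‖WithLp.toLp 2 (diagonal lam - (c / m) • (A * Aᵀ)).vec‖ := by
        gcongr; exact l2_opNorm_le_norm_vec _
    _ = ‖WithLp.toLp 2 (m • (diagonal lam - (c / m) • (A * Aᵀ))).vec‖ := by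
        rw [vec_smul, WithLp.toLp_smul, norm_smul, norm_of_nonneg hm.le]
    _ ≤ c * √m + 2 * c * √(L * m) := hE ▸ hj

/-- let `K` be a real symmetric PSD `N × N` matrix with diagonal entries
at most `1` and eigenvalues `λ₁ ≥ … ≥ λ_N` (eigendecomposition `K = V diag(λ) Vᵀ`).
Sample `j₁,…,j_m` i.i.d. uniformly from `{1,…,N}` (modelled by the uniform distribution
on `Fin m → Fin N`), set `K̂ = K.submatrix j j` and `K_b = K.submatrix id j`.  For every
`δ ∈ (0,1)` and `1 ≤ r ≤ N−1` with `λ_r > 0`, with probability at least `1 − δ`,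
`‖K − K_b K̂† K_bᵀ‖₂ ≤ 16 (ln(2/δ))² N²/(m λ_r) + λ_{r+1}`. -/
theorem stmt7 {N m : ℕ} (hm : 0 < m)
    (K : Matrix (Fin N) (Fin N) ℝ) (hK : K.PosSemidef) (hdiag : ∀ i, K i i ≤ 1)
    (lam : Fin N → ℝ) (V : Matrix (Fin N) (Fin N) ℝ)
    (hV : Vᵀ * V = 1) (hdecomp : K = V * Matrix.diagonal lam * Vᵀ)
    (hdesc : ∀ i j : Fin N, i ≤ j → lam j ≤ lam i)
    (pinv : (Fin m → Fin N) → Matrix (Fin m) (Fin m) ℝ)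
    (hpinv : ∀ j : Fin m → Fin N, IsMoorePenroseInv (K.submatrix j j) (pinv j))
    (δ : ℝ) (hδ : δ ∈ Set.Ioo (0 : ℝ) 1)
    (r : ℕ) (hrN : r < N)
    (hlamr : 0 < lam ⟨r - 1, by omega⟩) :
    ((Nat.card {j : Fin m → Fin N //
        ‖K - (K.submatrix id j * pinv j * (K.submatrix id j)ᵀ)‖
          ≤ 16 * (Real.log (2 / δ)) ^ 2 * N ^ 2 / (m * lam ⟨r - 1, by omega⟩)
            + lam ⟨r, hrN⟩}) : ℝ)
      ≥ (1 - δ) * N ^ m := by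
  obtain ⟨hδ0, hδ1⟩ := hδ
  have : Nonempty (Fin N) := ⟨⟨r, hrN⟩⟩
  have hN : (0 : ℝ) < N := by exact_mod_cast (Nat.zero_le r).trans_lt hrN
  have hmR : (0 : ℝ) < m := by exact_mod_cast hm
  have hlam := hK.nonneg_of_eq_mul_diagonal_mul_transpose hV hdecomp
  obtain ⟨X, rfl, hXXt⟩ := exists_gram_factor hlam hV hdecomp
  have hsplit : ∀ a, lam ⟨r - 1, by omega⟩ ≤ lam a ∨ lam a ≤ lam ⟨r, hrN⟩ := fun a =>
    (le_or_gt (a : ℕ) (r - 1)).imp (hdesc a _) fun h => hdesc _ a (show r ≤ (a : ℕ) by omega)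
  set L := log (2 / δ)
  have hL : log 2 ≤ L := log_le_log two_pos (by rw [le_div_iff₀ hδ0]; linarith)
  have hbad := card_lt_norm_vec_gram_sub_le X hdiag m (s := 2 * N * √(L * m)) (by positivity)
  have hexp : (2 * N * √(L * m)) ^ 2 / (4 * m * N ^ 2) = L := by
    rw [mul_pow, sq_sqrt (mul_nonneg (hL.trans' (log_nonneg one_le_two)) hmR.le)]
    field_simp
    ring
  rw [Fintype.card_fin, hexp, Real.exp_neg, Real.exp_log (by positivity), inv_div, hXXt] at hbad
  rw [ge_iff_le, show (N : ℝ) ^ m = Fintype.card (Fin m → Fin N) by simp]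
  refine one_sub_mul_card_le_nat_card (fun j hj => ?_) (hbad.trans ?_)
  · exact norm_nystrom_residual_le_of_norm_vec_le X hXXt hlam hlamr hsplit j (hpinv j) hN.le hmR
      hL (not_lt.mp hj)
  · simp only [Fintype.card_fun, Fintype.card_fin, Nat.cast_pow]
    nlinarith [pow_pos hN m]
end

section
/- For every p > 1 there exist constants c > 0 and c' > 0 such that for all positive integers m and N with N ≥ 64 (ln 4)² (m+1)², there exists a real symmetric positive semidefinite N×N matrix K with all diagonal entries equal to 1 whose eigenvalues satisfy λ_i ≤ c N i^{−p} for all i ∈ {1,…,N} (i.e., follow a p-power law), and such that for every subset S ⊆ {1,…,N} of size at most m, the Nyström approximation error satisfies ‖K − K_b K̂† K_b^⊤‖₂ ≥ c' N / m^p. -/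
/-!
Take the spectrum `λ_i ∝ i^(-p)`, `1 ≤ i ≤ N`, normalized to trace `N`. A symmetric matrix
of trace `N` can be brought to unit diagonal by orthogonal conjugations: if some diagonal entry
differs from `1`, another one lies on the other side of `1`, and by the intermediate value
theorem a Givens rotation in the plane of these two coordinates makes the first one equal to `1`
while leaving the rest of the diagonal untouched. This yields `K` with the prescribed power-law
spectrum and unit diagonal.

The Nyström approximation `K_b K̂† K_bᵀ` has rank at most `|S| ≤ m`, so it annihilates a nonzero
vector `x` in the span of the top `m + 1` eigenvectors of `K`. There `xᵀ (K - K̃) x = xᵀ K x` is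
at least `λ_{m+1} ‖x‖²`, and `λ_{m+1} ≥ N (m + 1)^(-p) / ζ(p) ≥ 2^(-p) N / (ζ(p) mᵖ)`.
-/

open Matrix
open scoped Matrix.Norms.L2Operator

namespace Matrix

lemma IsSymm.mul_mul_transpose {ι κ R : Type*} [Fintype ι] [CommSemiring R] {A : Matrix ι ι R}
    (hA : A.IsSymm) (P : Matrix κ ι R) : (P * A * Pᵀ).IsSymm := by
  rw [IsSymm, transpose_mul, transpose_mul, transpose_transpose, hA.eq, Matrix.mul_assoc]

variable {ι R : Type*} [DecidableEq ι] [CommRing R]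

def givensRotation (i j : ι) (c s : R) : Matrix ι ι R :=
  of fun a => if a = i then Pi.single i c + Pi.single j s
    else if a = j then Pi.single i (-s) + Pi.single j c else Pi.single a 1

variable {i j : ι} {c s : R}

lemma givensRotation_row_left : givensRotation i j c s i = Pi.single i c + Pi.single j s := by
  ext; simp [givensRotation]

lemma givensRotation_row_right (hij : i ≠ j) :
    givensRotation i j c s j = Pi.single i (-s) + Pi.single j c := by
  ext; simp [givensRotation, hij.symm]

lemma givensRotation_row_of_ne {a : ι} (hai : a ≠ i) (haj : a ≠ j) :
    givensRotation i j c s a = Pi.single a 1 := by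
  ext; simp [givensRotation, hai, haj]

variable [Fintype ι]

lemma givensRotation_mul_transpose (hij : i ≠ j) (hcs : c ^ 2 + s ^ 2 = 1) :
    givensRotation i j c s * (givensRotation i j c s)ᵀ = 1 := by
  ext a b
  rw [mul_apply', one_apply]
  change givensRotation i j c s a ⬝ᵥ givensRotation i j c s b = _
  by_cases hai : a = i <;> by_cases haj : a = j <;> by_cases hbi : b = i <;>
    by_cases hbj : b = j <;> by_cases hab : a = b <;> subst_vars <;>
    simp_all [givensRotation_row_left, givensRotation_row_right, givensRotation_row_of_ne,
      dotProduct_add] <;> first | linear_combination hcs | linear_combination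

lemma givensRotation_conj_apply_left (A : Matrix ι ι R) (hA : A.IsSymm) :
    (givensRotation i j c s * A * (givensRotation i j c s)ᵀ) i i =
      c ^ 2 * A i i + 2 * c * s * A i j + s ^ 2 * A j j := by
  rw [mul_mul_apply, transpose_transpose, givensRotation_row_left]
  simp [add_dotProduct, mulVec_add, hA.apply i j]
  ring

lemma givensRotation_conj_apply_of_ne (A : Matrix ι ι R) {l : ι} (hli : l ≠ i) (hlj : l ≠ j) :
    (givensRotation i j c s * A * (givensRotation i j c s)ᵀ) l l = A l l := by
  rw [mul_mul_apply, transpose_transpose, givensRotation_row_of_ne hli hlj]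
  simp

end Matrix

open Matrix

section EqualizeDiagonal

variable {ι : Type*} [Fintype ι] {A : Matrix ι ι ℝ} {a : ℝ}

lemma exists_diag_opposite (htr : A.trace = Fintype.card ι * a) {i : ι} (hi : A i i ≠ a) :
    ∃ j, (A i i - a) * (A j j - a) < 0 := by
  by_contra! h
  have hsum : ∑ j, (A i i - a) * (A j j - a) = 0 := by
    have hdiag : ∑ j, A j j = Fintype.card ι * a := htr
    simp [← Finset.mul_sum, Finset.sum_sub_distrib, hdiag]
  have hpos : 0 < ∑ j, (A i i - a) * (A j j - a) :=
    Finset.sum_pos' (fun j _ => h j) ⟨i, Finset.mem_univ i, mul_self_pos.2 (sub_ne_zero.2 hi)⟩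
  exact hpos.ne' hsum

variable [DecidableEq ι]

lemma exists_givensRotation_conj_apply_eq (hA : A.IsSymm) (i j : ι)
    (ha : a ∈ Set.uIcc (A i i) (A j j)) :
    ∃ c s : ℝ, c ^ 2 + s ^ 2 = 1 ∧
      (givensRotation i j c s * A * (givensRotation i j c s)ᵀ) i i = a := by
  let f : ℝ → ℝ := fun θ =>
    Real.cos θ ^ 2 * A i i + 2 * Real.cos θ * Real.sin θ * A i j + Real.sin θ ^ 2 * A j j
  have hf : ContinuousOn f (Set.uIcc 0 (Real.pi / 2)) := by fun_prop
  obtain ⟨θ, -, hθ⟩ := intermediate_value_uIcc hf (by simpa [f] using ha)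
  exact ⟨Real.cos θ, Real.sin θ, Real.cos_sq_add_sin_sq θ,
    (givensRotation_conj_apply_left A hA).trans hθ⟩

lemma exists_orthogonal_conj_diag_ne_subset (hA : A.IsSymm)
    (htr : A.trace = Fintype.card ι * a) {i : ι} (hi : A i i ≠ a) :
    ∃ R : Matrix ι ι ℝ, Rᵀ * R = 1 ∧
      ({l | (R * A * Rᵀ) l l ≠ a} : Finset ι) ⊆ ({l | A l l ≠ a} : Finset ι).erase i := by
  obtain ⟨j, hj⟩ := exists_diag_opposite htr hi
  have hji : j ≠ i := by
    rintro rfl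
    nlinarith
  have ha : a ∈ Set.uIcc (A i i) (A j j) := by
    rcases mul_neg_iff.1 hj with h | h
    · exact Set.mem_uIcc.2 (Or.inr ⟨by linarith, by linarith⟩)
    · exact Set.mem_uIcc.2 (Or.inl ⟨by linarith, by linarith⟩)
  obtain ⟨c, s, hcs, hii⟩ := exists_givensRotation_conj_apply_eq hA i j ha
  refine ⟨givensRotation i j c s,
    mul_eq_one_comm.1 (givensRotation_mul_transpose hji.symm hcs), fun l hl => ?_⟩
  simp only [Finset.mem_erase, Finset.mem_filter, Finset.mem_univ, true_and] at hl ⊢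
  have hli : l ≠ i := by
    rintro rfl
    exact hl hii
  refine ⟨hli, ?_⟩
  rcases eq_or_ne l j with rfl | hlj
  · rintro h
    rw [h, sub_self, mul_zero] at hj
    exact hj.false
  · rwa [givensRotation_conj_apply_of_ne A hli hlj] at hl

/-- The constant-diagonal case of the Schur–Horn theorem. -/
theorem exists_orthogonal_conj_diag_eq (hA : A.IsSymm) (htr : A.trace = Fintype.card ι * a) :
    ∃ V : Matrix ι ι ℝ, Vᵀ * V = 1 ∧ ∀ i, (V * A * Vᵀ) i i = a := by
  induction hn : ({l | A l l ≠ a} : Finset ι).card using Nat.strong_induction_on generalizing A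
    with | _ n ih =>
  by_cases hdiag : ∀ i, A i i = a
  · exact ⟨1, by simp, by simpa using hdiag⟩
  push Not at hdiag
  obtain ⟨i, hi⟩ := hdiag
  obtain ⟨R, hR, hsub⟩ := exists_orthogonal_conj_diag_ne_subset hA htr hi
  have hcard : ({l | (R * A * Rᵀ) l l ≠ a} : Finset ι).card < n := by
    refine hn ▸ (Finset.card_le_card hsub).trans_lt (Finset.card_erase_lt_of_mem ?_)
    simpa using hi
  have htr' : (R * A * Rᵀ).trace = Fintype.card ι * a := by
    rw [trace_mul_cycle, hR, Matrix.one_mul, htr]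
  obtain ⟨W, hW, hdiag⟩ := ih _ hcard (hA.mul_mul_transpose R) htr' rfl
  refine ⟨W * R, ?_, fun l => ?_⟩
  · rw [transpose_mul, Matrix.mul_assoc, ← Matrix.mul_assoc Wᵀ, hW, Matrix.one_mul, hR]
  · simpa only [transpose_mul, Matrix.mul_assoc] using hdiag l

end EqualizeDiagonal

section LowRankApproximation

lemma dotProduct_mulVec_le_l2_opNorm_mul {n : Type*} [Fintype n] [DecidableEq n]
    (A : Matrix n n ℝ) (x : n → ℝ) :
    x ⬝ᵥ (A *ᵥ x) ≤ ‖A‖ * (x ⬝ᵥ x) := by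
  have hinner : ∀ y z : n → ℝ, y ⬝ᵥ z = inner ℝ (WithLp.toLp 2 y) (WithLp.toLp 2 z) := by
    intro y z
    simp [EuclideanSpace.inner_toLp_toLp, dotProduct_comm]
  rw [hinner, hinner, real_inner_self_eq_norm_mul_norm]
  calc inner ℝ (WithLp.toLp 2 x) (WithLp.toLp 2 (A *ᵥ x))
      ≤ ‖WithLp.toLp 2 x‖ * ‖WithLp.toLp 2 (A *ᵥ x)‖ := real_inner_le_norm _ _
    _ ≤ ‖WithLp.toLp 2 x‖ * (‖A‖ * ‖WithLp.toLp 2 x‖) := by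
      gcongr
      exact A.l2_opNorm_mulVec (WithLp.toLp 2 x)
    _ = ‖A‖ * (‖WithLp.toLp 2 x‖ * ‖WithLp.toLp 2 x‖) := by ring

lemma exists_ne_zero_mulVec_eq_zero_of_rank_le {K κ : Type*} [Field K] [Fintype κ] {N m : ℕ}
    (hmN : m < N) (M : Matrix κ (Fin N) K) (hM : M.rank ≤ m) :
    ∃ w : Fin N → K, w ≠ 0 ∧ (∀ t : Fin N, m < t → w t = 0) ∧ M *ᵥ w = 0 := by
  let L := M.mulVecLin ∘ₗ Function.ExtendByZero.linearMap K (Fin.castLE hmN)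
  have hrange : Module.finrank K (LinearMap.range L) < Module.finrank K (Fin (m + 1) → K) := by
    calc Module.finrank K (LinearMap.range L) ≤ M.rank :=
          Submodule.finrank_mono (LinearMap.range_comp_le_range _ _)
      _ < m + 1 := Nat.lt_succ_of_le hM
      _ = _ := (Module.finrank_fin_fun K).symm
  obtain ⟨u, hu, hu0⟩ := Submodule.ne_bot_iff _ |>.1 <|
    LinearMap.ker_rangeRestrict L ▸ LinearMap.ker_ne_bot_of_finrank_lt hrange
  refine ⟨Function.extend (Fin.castLE hmN) u 0, ?_, fun t ht => ?_, hu⟩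
  · exact fun h => hu0 <| Function.extend_injective (Fin.castLE_injective hmN) 0 <|
      h.trans (Function.extend_zero _).symm
  · refine Function.extend_apply' _ _ _ ?_
    rintro ⟨a, rfl⟩
    simp only [Fin.val_castLE] at ht
    omega

lemma mulVec_dotProduct_mulVec_of_transpose_mul_self {n : Type*} [Fintype n] [DecidableEq n]
    {V : Matrix n n ℝ} (hV : Vᵀ * V = 1) (x y : n → ℝ) :
    (V *ᵥ x) ⬝ᵥ (V *ᵥ y) = x ⬝ᵥ y := by
  rw [dotProduct_mulVec, ← vecMul_transpose, vecMul_vecMul, hV, vecMul_one]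

lemma mul_dotProduct_le_dotProduct_conj_diagonal {n : Type*} [Fintype n] [DecidableEq n]
    [LinearOrder n] {V : Matrix n n ℝ} (hV : Vᵀ * V = 1) {lam : n → ℝ} (hlam : Antitone lam)
    {k : n} {w : n → ℝ} (hw : ∀ t, k < t → w t = 0) :
    lam k * (w ⬝ᵥ w) ≤ (V *ᵥ w) ⬝ᵥ ((V * diagonal lam * Vᵀ) *ᵥ (V *ᵥ w)) := by
  rw [mulVec_mulVec, Matrix.mul_assoc, Matrix.mul_assoc, hV, Matrix.mul_one, ← mulVec_mulVec,
    mulVec_dotProduct_mulVec_of_transpose_mul_self hV, dotProduct, dotProduct, Finset.mul_sum]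
  refine Finset.sum_le_sum fun t _ => ?_
  rcases le_or_gt t k with htk | hkt
  · rw [mulVec_diagonal]
    nlinarith [hlam htk, mul_self_nonneg (w t)]
  · simp [hw t hkt]

/-- The lower bound in the Eckart–Young–Mirsky theorem. -/
theorem le_l2_opNorm_sub_of_rank_le {N m : ℕ} (hmN : m < N) {V : Matrix (Fin N) (Fin N) ℝ}
    (hV : Vᵀ * V = 1) {lam : Fin N → ℝ} (hlam : Antitone lam) {B : Matrix (Fin N) (Fin N) ℝ}
    (hB : B.rank ≤ m) : lam ⟨m, hmN⟩ ≤ ‖V * diagonal lam * Vᵀ - B‖ := by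
  obtain ⟨w, hw0, hsupp, hBw⟩ :=
    exists_ne_zero_mulVec_eq_zero_of_rank_le hmN (B * V) ((rank_mul_le_left B V).trans hB)
  have hpos : 0 < w ⬝ᵥ w :=
    lt_of_le_of_ne (Finset.sum_nonneg fun t _ => mul_self_nonneg (w t))
      (Ne.symm (dotProduct_self_eq_zero.not.2 hw0))
  rw [← mulVec_mulVec] at hBw
  refine le_of_mul_le_mul_right ?_ hpos
  calc lam ⟨m, hmN⟩ * (w ⬝ᵥ w)
      ≤ (V *ᵥ w) ⬝ᵥ ((V * diagonal lam * Vᵀ) *ᵥ (V *ᵥ w)) :=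
        mul_dotProduct_le_dotProduct_conj_diagonal hV hlam hsupp
    _ = (V *ᵥ w) ⬝ᵥ ((V * diagonal lam * Vᵀ - B) *ᵥ (V *ᵥ w)) := by
        rw [sub_mulVec, hBw, sub_zero]
    _ ≤ ‖V * diagonal lam * Vᵀ - B‖ * ((V *ᵥ w) ⬝ᵥ (V *ᵥ w)) :=
        dotProduct_mulVec_le_l2_opNorm_mul _ _
    _ = ‖V * diagonal lam * Vᵀ - B‖ * (w ⬝ᵥ w) := by
        rw [mulVec_dotProduct_mulVec_of_transpose_mul_self hV]

end LowRankApproximation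

section PowerLaw

variable {p : ℝ} {N : ℕ}

lemma summable_add_one_rpow_neg (hp : 1 < p) : Summable fun k : ℕ => ((k : ℝ) + 1) ^ (-p) := by
  refine ((Real.summable_one_div_nat_add_rpow 1 p).2 hp).congr fun k => ?_
  rw [abs_of_pos (by positivity), Real.rpow_neg (by positivity), one_div]

lemma one_le_tsum_add_one_rpow_neg (hp : 1 < p) : 1 ≤ ∑' k : ℕ, ((k : ℝ) + 1) ^ (-p) := by
  simpa using (summable_add_one_rpow_neg hp).le_tsum 0 fun k _ => by positivity

lemma two_rpow_neg_div_rpow_le_add_one_rpow_neg {x : ℝ} (hx : 1 ≤ x) (hp : 0 ≤ p) :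
    2 ^ (-p) / x ^ p ≤ (x + 1) ^ (-p) := by
  calc 2 ^ (-p) / x ^ p = (2 * x) ^ (-p) := by
        rw [Real.mul_rpow (by norm_num) (by positivity), Real.rpow_neg (x := x) (by positivity),
          div_eq_mul_inv]
    _ ≤ (x + 1) ^ (-p) := Real.rpow_le_rpow_of_nonpos (by positivity) (by linarith) (by linarith)

/-- Normalized to trace `N`, as a unit diagonal forces. -/
noncomputable def powerLawSpectrum (p : ℝ) (N : ℕ) (i : Fin N) : ℝ :=
  N * ((i : ℝ) + 1) ^ (-p) / ∑ j : Fin N, ((j : ℝ) + 1) ^ (-p)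

lemma one_le_sum_add_one_rpow_neg (hN : 0 < N) : 1 ≤ ∑ j : Fin N, ((j : ℝ) + 1) ^ (-p) := by
  simpa using Finset.single_le_sum (f := fun j : Fin N => ((j : ℝ) + 1) ^ (-p))
    (fun j _ => by positivity) (Finset.mem_univ ⟨0, hN⟩)

lemma powerLawSpectrum_nonneg (i : Fin N) : 0 ≤ powerLawSpectrum p N i := by
  unfold powerLawSpectrum
  positivity

lemma sum_powerLawSpectrum : ∑ i, powerLawSpectrum p N i = N := by
  rcases N.eq_zero_or_pos with rfl | hN
  · simp
  have hT := (one_le_sum_add_one_rpow_neg (p := p) hN).trans_lt' one_pos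
  simp only [powerLawSpectrum, ← Finset.sum_div, ← Finset.mul_sum]
  field_simp

lemma powerLawSpectrum_antitone (hp : 0 ≤ p) : Antitone (powerLawSpectrum p N) := by
  intro i j hij
  unfold powerLawSpectrum
  gcongr _ * ?_ / _
  exact Real.rpow_le_rpow_of_nonpos (by positivity) (by simpa using hij) (by linarith)

lemma powerLawSpectrum_le (i : Fin N) : powerLawSpectrum p N i ≤ N * ((i : ℝ) + 1) ^ (-p) :=
  div_le_self (by positivity) (one_le_sum_add_one_rpow_neg i.pos)

lemma le_powerLawSpectrum (hp : 1 < p) (i : Fin N) :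
    N * ((i : ℝ) + 1) ^ (-p) / ∑' k : ℕ, ((k : ℝ) + 1) ^ (-p) ≤ powerLawSpectrum p N i := by
  refine div_le_div_of_nonneg_left (by positivity)
    ((one_le_sum_add_one_rpow_neg i.pos).trans_lt' one_pos) ?_
  rw [Fin.sum_univ_eq_sum_range (fun k => ((k : ℝ) + 1) ^ (-p))]
  exact (summable_add_one_rpow_neg hp).sum_le_tsum _ fun k _ => by positivity

end PowerLaw

/-- for every `p > 1` there are constants `c, c' > 0` such that for all
positive integers `m, N` with `N ≥ 64 (ln 4)² (m+1)²`, there is a real symmetric PSD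
`N × N` matrix `K` with unit diagonal whose eigenvalues (in descending order, with
orthogonal eigendecomposition `K = V diag(λ) Vᵀ`) satisfy the `p`-power law
`λ_i ≤ c N i^{−p}`, and such that for every subset `S ⊆ {1,…,N}` with `|S| ≤ m` the
Nyström approximation error satisfies `‖K − K_b K̂† K_bᵀ‖₂ ≥ c' N/mᵖ`. -/
theorem stmt15 (p : ℝ) (hp : 1 < p) :
    ∃ c c' : ℝ, 0 < c ∧ 0 < c' ∧
      ∀ m N : ℕ, 0 < m → 0 < N →
        (N : ℝ) ≥ 64 * (Real.log 4) ^ 2 * (m + 1) ^ 2 →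
        ∃ K : Matrix (Fin N) (Fin N) ℝ, K.PosSemidef ∧ (∀ i, K i i = 1) ∧
          (∃ (V : Matrix (Fin N) (Fin N) ℝ) (lam : Fin N → ℝ),
            Vᵀ * V = 1 ∧ K = V * Matrix.diagonal lam * Vᵀ ∧
            (∀ i j : Fin N, i ≤ j → lam j ≤ lam i) ∧
            (∀ i : Fin N, lam i ≤ c * N * (((i : ℕ) + 1 : ℝ)) ^ (-p))) ∧
          ∀ S : Finset (Fin N), S.card ≤ m →
            ∀ Kdag : Matrix {x // x ∈ S} {x // x ∈ S} ℝ,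
              IsMoorePenroseInv (K.submatrix (fun i : {x // x ∈ S} => (i : Fin N))
                  (fun j : {x // x ∈ S} => (j : Fin N))) Kdag →
              ‖K - (K.submatrix id (fun i : {x // x ∈ S} => (i : Fin N)) * Kdag *
                  (K.submatrix id (fun i : {x // x ∈ S} => (i : Fin N)))ᵀ)‖
                ≥ c' * N / (m : ℝ) ^ p := by
  set Z := ∑' k : ℕ, ((k : ℝ) + 1) ^ (-p)
  have hZ : 0 < Z := (one_le_tsum_add_one_rpow_neg hp).trans_lt' one_pos
  refine ⟨1, 2 ^ (-p) / Z, one_pos, by positivity, fun m N hm _ hN => ?_⟩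
  have hmN : m < N := by
    have hlog : 1 ≤ Real.log 4 := by
      rw [Real.le_log_iff_exp_le (by norm_num)]
      linarith [Real.exp_one_lt_d9]
    have hlog2 : 1 ≤ Real.log 4 ^ 2 := one_le_pow₀ hlog
    have hsq : (m : ℝ) + 1 ≤ ((m : ℝ) + 1) ^ 2 := by nlinarith
    have : (m : ℝ) < N := by nlinarith
    exact_mod_cast this
  have hlam := powerLawSpectrum_antitone (N := N) (by linarith : 0 ≤ p)
  obtain ⟨V, hV, hdiag⟩ := exists_orthogonal_conj_diag_eq (isSymm_diagonal (powerLawSpectrum p N))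
    (a := 1) (by simp [trace_diagonal, sum_powerLawSpectrum])
  set K := V * diagonal (powerLawSpectrum p N) * Vᵀ
  refine ⟨K, ?_, hdiag,
    ⟨V, powerLawSpectrum p N, hV, rfl, fun i j hij => hlam hij,
      fun i => by simpa using powerLawSpectrum_le i⟩, fun S hS Kdag _ => ?_⟩
  · simpa only [conjTranspose_eq_transpose_of_trivial] using
      (posSemidef_diagonal_iff.2 powerLawSpectrum_nonneg).mul_mul_conjTranspose_same V
  have hrank : (K.submatrix id (fun i : {x // x ∈ S} => (i : Fin N)) * Kdag *
      (K.submatrix id (fun i : {x // x ∈ S} => (i : Fin N)))ᵀ).rank ≤ m :=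
    (rank_mul_le_left _ _).trans <| (rank_mul_le_left _ _).trans <|
      (rank_le_card_width _).trans (by simpa using hS)
  have hm1 : (1 : ℝ) ≤ m := by exact_mod_cast hm
  calc 2 ^ (-p) / Z * N / (m : ℝ) ^ p
      = N * (2 ^ (-p) / (m : ℝ) ^ p) / Z := by ring
    _ ≤ N * ((m : ℝ) + 1) ^ (-p) / Z := by
      gcongr
      exact two_rpow_neg_div_rpow_le_add_one_rpow_neg hm1 (by linarith)
    _ ≤ powerLawSpectrum p N ⟨m, hmN⟩ := le_powerLawSpectrum hp ⟨m, hmN⟩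
    _ ≤ _ := le_l2_opNorm_sub_of_rank_le hmN hV hlam hrank
end
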